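/- (Whole-network spectral covering bound) Let σ_1,…,σ_L be ρ_i-Lipschitz with σ_i(0)=0, reference matrices M_1,…,M_L, spectral norm bounds s_i, and (2,1)-norm bounds b_i. Let X ∈ ℝ^{n×d} with rows the data, and let H_X = {F_A(X^T) : ‖A_i‖_σ ≤ s_i, ‖A_i^T − M_i^T‖_{2,1} ≤ b_i}, with all matrix dimensions at most W. Then for any ε > 0, ln N(H_X, ε, ‖·‖_2) ≤ (‖X‖_2² ln(2W²)/ε²) · (∏_{j=1}^L s_j² ρ_j²) · (Σ_{i=1}^L (b_i/s_i)^{2/3})³. -/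

import Mathlib

open Finset

/-- Frobenius norm. -/
noncomputable def frobNorm {n m : ℕ} (A : Matrix (Fin n) (Fin m) ℝ) : ℝ :=
  Real.sqrt (∑ i, ∑ j, (A i j) ^ 2)

/-- Euclidean norm of a vector. -/
noncomputable def euclNorm {d : ℕ} (v : Fin d → ℝ) : ℝ := Real.sqrt (∑ i, v i ^ 2)

/-- Spectral (operator ℓ_2 → ℓ_2) norm. -/
noncomputable def specNorm {d m : ℕ} (A : Matrix (Fin d) (Fin m) ℝ) : ℝ :=
  ⨆ x : {x : Fin m → ℝ // euclNorm x ≤ 1}, euclNorm (A.mulVec x.1)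

/-- (2,1) group norm: sum of the ℓ_2 norms of the columns. -/
noncomputable def norm21 {d m : ℕ} (A : Matrix (Fin d) (Fin m) ℝ) : ℝ :=
  ∑ j, Real.sqrt (∑ i, (A i j) ^ 2)

/-- The forward image of the data matrix Xᵀ through the first `i` layers. -/
noncomputable def netF (d : ℕ → ℕ) (n : ℕ)
    (σ : ∀ j : ℕ, Matrix (Fin (d (j + 1))) (Fin n) ℝ → Matrix (Fin (d (j + 1))) (Fin n) ℝ)
    (A : ∀ j : ℕ, Matrix (Fin (d (j + 1))) (Fin (d j)) ℝ)
    (X : Matrix (Fin n) (Fin (d 0)) ℝ) : ∀ i : ℕ, Matrix (Fin (d i)) (Fin n) ℝ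
  | 0 => X.transpose
  | (i + 1) => σ i (A i * netF d n σ A X i)

noncomputable def matL (a b : ℕ) : Matrix (Fin a) (Fin b) ℝ →ₗ[ℝ] EuclideanSpace ℝ (Fin a × Fin b) where
  toFun A := (WithLp.equiv 2 _).symm (fun p => A p.1 p.2)
  map_add' := fun x y => rfl
  map_smul' := fun c x => rfl

noncomputable def vecL (a : ℕ) : (Fin a → ℝ) →ₗ[ℝ] EuclideanSpace ℝ (Fin a) where
  toFun v := (WithLp.equiv 2 _).symm v
  map_add' := fun x y => rfl
  map_smul' := fun c x => rfl

lemma frobNorm_eq {a b : ℕ} (A : Matrix (Fin a) (Fin b) ℝ) : frobNorm A = ‖matL a b A‖ := by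
  rw [EuclideanSpace.norm_eq, frobNorm]
  rw [Fintype.sum_prod_type]
  congr 1
  refine Finset.sum_congr rfl fun i _ => Finset.sum_congr rfl fun j _ => ?_
  rw [Real.norm_eq_abs, sq_abs]
  rfl

lemma euclNorm_eq {a : ℕ} (v : Fin a → ℝ) : euclNorm v = ‖vecL a v‖ := by
  rw [EuclideanSpace.norm_eq, euclNorm]
  congr 1
  refine Finset.sum_congr rfl fun i _ => ?_
  rw [Real.norm_eq_abs, sq_abs]
  rfl

lemma frobNorm_nonneg {a b : ℕ} (A : Matrix (Fin a) (Fin b) ℝ) : 0 ≤ frobNorm A :=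
  Real.sqrt_nonneg _

lemma euclNorm_nonneg {a : ℕ} (v : Fin a → ℝ) : 0 ≤ euclNorm v := Real.sqrt_nonneg _

lemma frobNorm_zero {a b : ℕ} : frobNorm (0 : Matrix (Fin a) (Fin b) ℝ) = 0 := by
  rw [frobNorm_eq, map_zero, norm_zero]

lemma frobNorm_eq_zero {a b : ℕ} {A : Matrix (Fin a) (Fin b) ℝ} (h : frobNorm A = 0) : A = 0 := by
  rw [frobNorm_eq, norm_eq_zero] at h
  have : ∀ p : Fin a × Fin b, (matL a b A) p = 0 := fun p => by rw [h]; rfl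
  ext i j
  exact this (i, j)

lemma frobNorm_sub_le {a b : ℕ} (A B C : Matrix (Fin a) (Fin b) ℝ) :
    frobNorm (A - C) ≤ frobNorm (A - B) + frobNorm (B - C) := by
  simp only [frobNorm_eq, map_sub]
  exact norm_sub_le_norm_sub_add_norm_sub _ _ _

section helpers

lemma euclNorm_sq {a : ℕ} (v : Fin a → ℝ) : euclNorm v ^ 2 = ∑ i, v i ^ 2 := by
  rw [euclNorm, Real.sq_sqrt]
  positivity

lemma euclNorm_nonneg' {a : ℕ} (v : Fin a → ℝ) : 0 ≤ euclNorm v := Real.sqrt_nonneg _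

lemma sum_sq_le_sq_sum {ι : Type*} (t : Finset ι) (f : ι → ℝ) (hf : ∀ i ∈ t, 0 ≤ f i) :
    ∑ i ∈ t, f i ^ 2 ≤ (∑ i ∈ t, f i) ^ 2 := by
  have h : ∀ i ∈ t, f i ^ 2 ≤ f i * ∑ j ∈ t, f j := by
    intro i hi
    rw [sq]
    exact mul_le_mul_of_nonneg_left (Finset.single_le_sum hf hi) (hf i hi)
  calc ∑ i ∈ t, f i ^ 2 ≤ ∑ i ∈ t, f i * ∑ j ∈ t, f j := Finset.sum_le_sum h
    _ = (∑ i ∈ t, f i) ^ 2 := by rw [← Finset.sum_mul, sq]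

-- row i of A*Z as mulVec on column
lemma mul_apply_col {a b c : ℕ} (A : Matrix (Fin a) (Fin b) ℝ) (Z : Matrix (Fin b) (Fin c) ℝ)
    (i : Fin a) (j : Fin c) : (A * Z) i j = A.mulVec (fun k => Z k j) i := by
  simp [Matrix.mul_apply, Matrix.mulVec, dotProduct]

lemma frobNorm_sq {a b : ℕ} (A : Matrix (Fin a) (Fin b) ℝ) :
    frobNorm A ^ 2 = ∑ i, ∑ j, A i j ^ 2 := by
  rw [frobNorm, Real.sq_sqrt]
  positivity

lemma frobNorm_le_of_sq_le_sq {a b : ℕ} {A : Matrix (Fin a) (Fin b) ℝ} {t : ℝ} (ht : 0 ≤ t)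
    (h : frobNorm A ^ 2 ≤ t ^ 2) : frobNorm A ≤ t := by
  nlinarith [frobNorm_nonneg A]

lemma euclNorm_le_of_sq_le_sq {a : ℕ} {v : Fin a → ℝ} {t : ℝ} (ht : 0 ≤ t)
    (h : euclNorm v ^ 2 ≤ t ^ 2) : euclNorm v ≤ t := by
  nlinarith [euclNorm_nonneg' v]

lemma euclNorm_zero {a : ℕ} : euclNorm (0 : Fin a → ℝ) = 0 := by
  simp [euclNorm]

lemma euclNorm_eq_zero_iff {a : ℕ} {v : Fin a → ℝ} : euclNorm v = 0 ↔ v = 0 := by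
  constructor
  · intro h
    have h2 : euclNorm v ^ 2 = 0 := by rw [h]; ring
    rw [euclNorm_sq] at h2
    funext i
    have := (Finset.sum_eq_zero_iff_of_nonneg (by intro i _; positivity)).1 h2 i (Finset.mem_univ i)
    have : v i ^ 2 = 0 := this
    simpa using pow_eq_zero_iff (n := 2) (by norm_num) |>.1 this
  · intro h; rw [h]; exact euclNorm_zero

lemma euclNorm_smul {a : ℕ} (c : ℝ) (v : Fin a → ℝ) : euclNorm (c • v) = |c| * euclNorm v := by
  rw [euclNorm, euclNorm]
  have : ∀ i, (c • v) i ^ 2 = c ^ 2 * v i ^ 2 := by intro i; simp [Pi.smul_apply, smul_eq_mul]; ring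
  simp only [this, ← Finset.mul_sum]
  rw [Real.sqrt_mul (by positivity), Real.sqrt_sq_eq_abs]

end helpers

section spec

lemma euclNorm_mulVec_le_frob {a b : ℕ} (A : Matrix (Fin a) (Fin b) ℝ) (x : Fin b → ℝ) :
    euclNorm (A.mulVec x) ≤ frobNorm A * euclNorm x := by
  refine euclNorm_le_of_sq_le_sq (mul_nonneg (frobNorm_nonneg A) (euclNorm_nonneg' x)) ?_
  rw [euclNorm_sq, mul_pow, frobNorm_sq, euclNorm_sq]
  rw [Finset.sum_mul]
  refine Finset.sum_le_sum fun i _ => ?_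
  have := sum_mul_sq_le_sq_mul_sq Finset.univ (fun j => A i j) x
  simpa [Matrix.mulVec, dotProduct] using this

lemma specNorm_bddAbove {a b : ℕ} (A : Matrix (Fin a) (Fin b) ℝ) :
    BddAbove (Set.range fun x : {x : Fin b → ℝ // euclNorm x ≤ 1} => euclNorm (A.mulVec x.1)) := by
  refine ⟨frobNorm A, ?_⟩
  rintro y ⟨x, rfl⟩
  calc euclNorm (A.mulVec x.1) ≤ frobNorm A * euclNorm x.1 := euclNorm_mulVec_le_frob A x.1
    _ ≤ frobNorm A * 1 := by
        exact mul_le_mul_of_nonneg_left x.2 (frobNorm_nonneg A)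
    _ = frobNorm A := mul_one _

instance specNonempty {b : ℕ} : Nonempty {x : Fin b → ℝ // euclNorm x ≤ 1} :=
  ⟨⟨0, by rw [euclNorm_zero]; norm_num⟩⟩

lemma specNorm_le_iff {a b : ℕ} {A : Matrix (Fin a) (Fin b) ℝ} {t : ℝ} :
    specNorm A ≤ t ↔ ∀ x : Fin b → ℝ, euclNorm x ≤ 1 → euclNorm (A.mulVec x) ≤ t := by
  constructor
  · intro h x hx
    exact le_trans (le_ciSup (specNorm_bddAbove A) ⟨x, hx⟩) h
  · intro h
    exact ciSup_le fun x => h x.1 x.2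

lemma specNorm_nonneg {a b : ℕ} (A : Matrix (Fin a) (Fin b) ℝ) : 0 ≤ specNorm A := by
  refine le_trans ?_ (le_ciSup (specNorm_bddAbove A) ⟨0, by rw [euclNorm_zero]; norm_num⟩)
  rw [Matrix.mulVec_zero, euclNorm_zero]

lemma euclNorm_mulVec_le_spec {a b : ℕ} {A : Matrix (Fin a) (Fin b) ℝ} {t : ℝ}
    (h : specNorm A ≤ t) (z : Fin b → ℝ) : euclNorm (A.mulVec z) ≤ t * euclNorm z := by
  have ht : 0 ≤ t := le_trans (specNorm_nonneg A) h
  by_cases hz : z = 0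
  · subst hz; rw [Matrix.mulVec_zero, euclNorm_zero, euclNorm_zero, mul_zero]
  · have hzn : 0 < euclNorm z := by
      rcases lt_or_eq_of_le (euclNorm_nonneg' z) with h' | h'
      · exact h'
      · exact absurd (euclNorm_eq_zero_iff.1 h'.symm) hz
    have hu : euclNorm ((euclNorm z)⁻¹ • z) ≤ 1 := by
      rw [euclNorm_smul, abs_of_nonneg (inv_nonneg.2 (euclNorm_nonneg' z)), inv_mul_cancel₀ (ne_of_gt hzn)]
    have := specNorm_le_iff.1 h _ hu
    rw [Matrix.mulVec_smul, euclNorm_smul, abs_of_nonneg (inv_nonneg.2 (euclNorm_nonneg' z))] at this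
    calc euclNorm (A.mulVec z) = euclNorm z * ((euclNorm z)⁻¹ * euclNorm (A.mulVec z)) := by
          field_simp
      _ ≤ euclNorm z * t := mul_le_mul_of_nonneg_left this (le_of_lt hzn)
      _ = t * euclNorm z := mul_comm _ _

lemma frob_col_sq {a c : ℕ} (Z : Matrix (Fin a) (Fin c) ℝ) :
    frobNorm Z ^ 2 = ∑ j, euclNorm (fun k => Z k j) ^ 2 := by
  rw [frobNorm_sq, Finset.sum_comm]
  exact Finset.sum_congr rfl fun j _ => by rw [euclNorm_sq]

lemma frob_mul_le_spec {a b c : ℕ} {A : Matrix (Fin a) (Fin b) ℝ} {t : ℝ}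
    (h : specNorm A ≤ t) (Z : Matrix (Fin b) (Fin c) ℝ) :
    frobNorm (A * Z) ≤ t * frobNorm Z := by
  have ht : 0 ≤ t := le_trans (specNorm_nonneg A) h
  refine frobNorm_le_of_sq_le_sq (mul_nonneg ht (frobNorm_nonneg Z)) ?_
  rw [frob_col_sq, mul_pow, frob_col_sq, Finset.mul_sum]
  refine Finset.sum_le_sum fun j _ => ?_
  have hcol : (fun i => (A * Z) i j) = A.mulVec (fun k => Z k j) := by
    funext i; exact mul_apply_col A Z i j
  have h1 : euclNorm (fun i => (A * Z) i j) ≤ t * euclNorm (fun k => Z k j) := by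
    rw [hcol]; exact euclNorm_mulVec_le_spec h _
  nlinarith [euclNorm_nonneg' (fun i => (A * Z) i j), euclNorm_nonneg' (fun k => Z k j),
    mul_nonneg ht (euclNorm_nonneg' (fun k => Z k j))]

end spec


section n21

lemma norm21_transpose_eq {a b : ℕ} (B : Matrix (Fin a) (Fin b) ℝ) :
    norm21 B.transpose = ∑ i, euclNorm (B i) := by
  unfold norm21 euclNorm
  exact Finset.sum_congr rfl fun i _ => by simp [Matrix.transpose_apply]

lemma norm21_nonneg {a b : ℕ} (B : Matrix (Fin a) (Fin b) ℝ) : 0 ≤ norm21 B := by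
  unfold norm21
  exact Finset.sum_nonneg fun j _ => Real.sqrt_nonneg _

lemma row_sum_norm_le {a b c : ℕ} (B : Matrix (Fin a) (Fin b) ℝ) (Y : Matrix (Fin b) (Fin c) ℝ)
    (i : Fin a) : ∑ k, |B i k| * euclNorm (Y k) ≤ euclNorm (B i) * frobNorm Y := by
  have h := sum_mul_sq_le_sq_mul_sq Finset.univ (fun k => |B i k|) (fun k => euclNorm (Y k))
  have h1 : ∑ k, |B i k| ^ 2 = euclNorm (B i) ^ 2 := by
    rw [euclNorm_sq]; exact Finset.sum_congr rfl fun k _ => sq_abs _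
  have h2 : ∑ k, euclNorm (Y k) ^ 2 = frobNorm Y ^ 2 := by
    rw [frobNorm_sq]; exact Finset.sum_congr rfl fun k _ => by rw [euclNorm_sq]
  rw [h1, h2] at h
  have hnn : 0 ≤ ∑ k, |B i k| * euclNorm (Y k) :=
    Finset.sum_nonneg fun k _ => mul_nonneg (abs_nonneg _) (euclNorm_nonneg' _)
  nlinarith [euclNorm_nonneg' (B i), frobNorm_nonneg Y,
    mul_nonneg (euclNorm_nonneg' (B i)) (frobNorm_nonneg Y)]

lemma row_of_mul_norm_le {a b c : ℕ} (B : Matrix (Fin a) (Fin b) ℝ) (Y : Matrix (Fin b) (Fin c) ℝ)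
    (i : Fin a) : euclNorm (fun j => (B * Y) i j) ≤ ∑ k, |B i k| * euclNorm (Y k) := by
  have key : vecL c (fun j => (B * Y) i j) = ∑ k, (B i k) • vecL c (Y k) := by
    have h0 : (fun j => (B * Y) i j) = ∑ k, (B i k) • (Y k) := by
      funext j
      simp [Matrix.mul_apply, Finset.sum_apply, Pi.smul_apply, smul_eq_mul]
    rw [h0, map_sum]
    exact Finset.sum_congr rfl fun k _ => by rw [map_smul]
  rw [euclNorm_eq, key]
  calc ‖∑ k, (B i k) • vecL c (Y k)‖ ≤ ∑ k, ‖(B i k) • vecL c (Y k)‖ := norm_sum_le _ _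
    _ = ∑ k, |B i k| * euclNorm (Y k) := by
        refine Finset.sum_congr rfl fun k _ => ?_
        rw [norm_smul, Real.norm_eq_abs, euclNorm_eq]

lemma sum_abs_mul_le {a b c : ℕ} (B : Matrix (Fin a) (Fin b) ℝ) (Y : Matrix (Fin b) (Fin c) ℝ) :
    ∑ i, ∑ k, |B i k| * euclNorm (Y k) ≤ norm21 B.transpose * frobNorm Y := by
  rw [norm21_transpose_eq, Finset.sum_mul]
  exact Finset.sum_le_sum fun i _ => row_sum_norm_le B Y i

lemma frob_mul_le_norm21 {a b c : ℕ} (B : Matrix (Fin a) (Fin b) ℝ)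
    (Y : Matrix (Fin b) (Fin c) ℝ) :
    frobNorm (B * Y) ≤ norm21 B.transpose * frobNorm Y := by
  refine frobNorm_le_of_sq_le_sq (mul_nonneg (norm21_nonneg _) (frobNorm_nonneg Y)) ?_
  have hsq : frobNorm (B * Y) ^ 2 = ∑ i, euclNorm (fun j => (B * Y) i j) ^ 2 := by
    rw [frobNorm_sq]
    exact Finset.sum_congr rfl fun i _ => by rw [euclNorm_sq]
  rw [hsq]
  have step1 : ∀ i, euclNorm (fun j => (B * Y) i j) ≤ euclNorm (B i) * frobNorm Y :=
    fun i => le_trans (row_of_mul_norm_le B Y i) (row_sum_norm_le B Y i)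
  calc ∑ i, euclNorm (fun j => (B * Y) i j) ^ 2
      ≤ ∑ i, (euclNorm (B i) * frobNorm Y) ^ 2 := by
        refine Finset.sum_le_sum fun i _ => ?_
        have := step1 i
        nlinarith [euclNorm_nonneg' (fun j => (B * Y) i j),
          mul_nonneg (euclNorm_nonneg' (B i)) (frobNorm_nonneg Y)]
    _ = (∑ i, euclNorm (B i) ^ 2) * frobNorm Y ^ 2 := by
        rw [Finset.sum_mul]; exact Finset.sum_congr rfl fun i _ => by ring
    _ ≤ (∑ i, euclNorm (B i)) ^ 2 * frobNorm Y ^ 2 := by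
        have := sum_sq_le_sq_sum Finset.univ (fun i => euclNorm (B i))
          (fun i _ => euclNorm_nonneg' _)
        nlinarith [sq_nonneg (frobNorm Y)]
    _ = (norm21 B.transpose * frobNorm Y) ^ 2 := by rw [norm21_transpose_eq]; ring

lemma frob_le_norm21T {a b : ℕ} (B : Matrix (Fin a) (Fin b) ℝ) :
    frobNorm B ≤ norm21 B.transpose := by
  refine frobNorm_le_of_sq_le_sq (norm21_nonneg _) ?_
  rw [norm21_transpose_eq]
  have hsq : frobNorm B ^ 2 = ∑ i, euclNorm (B i) ^ 2 := by
    rw [frobNorm_sq]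
    exact Finset.sum_congr rfl fun i _ => by rw [euclNorm_sq]
  rw [hsq]
  exact sum_sq_le_sq_sum Finset.univ _ (fun i _ => euclNorm_nonneg' _)

lemma frobNorm_transpose {a b : ℕ} (A : Matrix (Fin a) (Fin b) ℝ) :
    frobNorm A.transpose = frobNorm A := by
  unfold frobNorm
  rw [Finset.sum_comm]
  rfl

end n21


section maurey
variable {E : Type*} [NormedAddCommGroup E] [InnerProductSpace ℝ E]
variable {ι : Type*} [Fintype ι]

lemma exists_le_weighted (α : ι → ℝ) (hα0 : ∀ l, 0 ≤ α l) (hα1 : ∑ l, α l = 1)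
    (f : ι → ℝ) : ∃ l, f l ≤ ∑ l, α l * f l := by
  by_contra h
  push_neg at h
  set S := ∑ l, α l * f l with hS
  obtain ⟨l0, -, hl0⟩ := Finset.exists_ne_zero_of_sum_ne_zero (by rw [hα1]; norm_num :
    ∑ l, α l ≠ 0)
  have hl0' : 0 < α l0 := lt_of_le_of_ne (hα0 l0) (Ne.symm hl0)
  have hstrict : ∑ l, α l * S < ∑ l, α l * f l := by
    refine Finset.sum_lt_sum (fun l _ => mul_le_mul_of_nonneg_left (le_of_lt (h l)) (hα0 l))
      ⟨l0, Finset.mem_univ l0, ?_⟩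
    exact mul_lt_mul_of_pos_left (h l0) hl0'
  rw [← Finset.sum_mul, hα1, one_mul] at hstrict
  exact lt_irrefl S hstrict

lemma inner_weighted (α : ι → ℝ) (v : ι → E) (w : E) :
    (inner ℝ w (∑ l, α l • v l) : ℝ) = ∑ l, α l * (inner ℝ w (v l) : ℝ) := by
  rw [inner_sum]
  exact Finset.sum_congr rfl fun l _ => real_inner_smul_right w (v l) (α l)

lemma weighted_dist_sq (α : ι → ℝ) (hα1 : ∑ l, α l = 1) (v : ι → E) (w : E) :
    ∑ l, α l * ‖w - v l‖ ^ 2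
      = ‖w‖ ^ 2 - 2 * (inner ℝ w (∑ l, α l • v l) : ℝ) + ∑ l, α l * ‖v l‖ ^ 2 := by
  have expand : ∀ l, α l * ‖w - v l‖ ^ 2
      = α l * ‖w‖ ^ 2 - 2 * (α l * (inner ℝ w (v l) : ℝ)) + α l * ‖v l‖ ^ 2 := by
    intro l
    rw [@norm_sub_sq_real]
    ring
  calc ∑ l, α l * ‖w - v l‖ ^ 2
      = ∑ l, (α l * ‖w‖ ^ 2 - 2 * (α l * (inner ℝ w (v l) : ℝ)) + α l * ‖v l‖ ^ 2) :=
        Finset.sum_congr rfl fun l _ => expand l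
    _ = (∑ l, α l * ‖w‖ ^ 2) - 2 * (∑ l, α l * (inner ℝ w (v l) : ℝ))
          + ∑ l, α l * ‖v l‖ ^ 2 := by
        rw [Finset.sum_add_distrib, Finset.sum_sub_distrib, Finset.mul_sum]
    _ = ‖w‖ ^ 2 - 2 * (inner ℝ w (∑ l, α l • v l) : ℝ) + ∑ l, α l * ‖v l‖ ^ 2 := by
        rw [inner_weighted, ← Finset.sum_mul, hα1, one_mul]

lemma maurey_sq (α : ι → ℝ) (hα0 : ∀ l, 0 ≤ α l) (hα1 : ∑ l, α l = 1)
    (v : ι → E) (c : ℝ) (hv : ∀ l, ‖v l‖ ≤ c) {p : E} (hp : p = ∑ l, α l • v l) :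
    ∀ k : ℕ, 1 ≤ k →
      ∃ g : Fin k → ι, ‖(k : ℝ)⁻¹ • (∑ t, v (g t)) - p‖ ^ 2 ≤ (c ^ 2 - ‖p‖ ^ 2) / k := by
  have hvc : ∑ l, α l * ‖v l‖ ^ 2 ≤ c ^ 2 := by
    obtain ⟨l0, -, hl0⟩ := Finset.exists_ne_zero_of_sum_ne_zero (by rw [hα1]; norm_num :
      ∑ l, α l ≠ 0)
    have hc : 0 ≤ c := le_trans (norm_nonneg _) (hv l0)
    calc ∑ l, α l * ‖v l‖ ^ 2 ≤ ∑ l, α l * c ^ 2 := by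
          refine Finset.sum_le_sum fun l _ => mul_le_mul_of_nonneg_left ?_ (hα0 l)
          exact pow_le_pow_left₀ (norm_nonneg _) (hv l) 2
      _ = c ^ 2 := by rw [← Finset.sum_mul, hα1, one_mul]
  have hVar : ∑ l, α l * ‖p - v l‖ ^ 2 ≤ c ^ 2 - ‖p‖ ^ 2 := by
    have h := weighted_dist_sq α hα1 v p
    rw [← hp] at h
    rw [h, real_inner_self_eq_norm_sq]
    linarith
  intro k hk
  induction k with
  | zero => omega
  | succ k ih =>
    rcases Nat.eq_or_lt_of_le hk with h1 | h1
    · -- base case k = 0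
      have hk0 : k = 0 := by omega
      subst hk0
      obtain ⟨l, hl⟩ := exists_le_weighted α hα0 hα1 (fun l => ‖p - v l‖ ^ 2)
      refine ⟨fun _ => l, ?_⟩
      have h2 : ∑ _t : Fin (0+1), v l = v l := by simp
      have h3 : (((0:ℕ)+1 : ℕ) : ℝ)⁻¹ = 1 := by norm_num
      have h4 : (((0:ℕ)+1 : ℕ) : ℝ) = 1 := by norm_num
      rw [h2, h3, h4, one_smul, norm_sub_rev, div_one]
      exact le_trans hl hVar
    · have hk' : 1 ≤ k := by omega
      obtain ⟨g, hg⟩ := ih hk'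
      set μ := (k : ℝ)⁻¹ • (∑ t, v (g t)) with hμ
      have hkpos : (0 : ℝ) < k := by exact_mod_cast Nat.pos_of_ne_zero (by omega)
      have hkμ : (k : ℝ) • μ = ∑ t, v (g t) := by
        rw [hμ, smul_smul, mul_inv_cancel₀ (ne_of_gt hkpos), one_smul]
      set q : E := (k : ℝ) • (μ - p) with hq
      have key : ∀ l : ι,
          ((k + 1 : ℕ) : ℝ)⁻¹ • (∑ t : Fin (k+1), v (Fin.snoc (α := fun _ => ι) g l t)) - p
          = ((k : ℝ) + 1)⁻¹ • (q + (v l - p)) := by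
        intro l
        have hsum : ∑ t : Fin (k+1), v (Fin.snoc (α := fun _ => ι) g l t)
            = (∑ t : Fin k, v (g t)) + v l := by
          rw [Fin.sum_univ_castSucc]
          congr 1
          · exact Finset.sum_congr rfl fun t _ => by rw [Fin.snoc_castSucc]
          · rw [Fin.snoc_last]
        have hcast : ((k + 1 : ℕ) : ℝ) = (k : ℝ) + 1 := by push_cast; ring
        rw [hsum, hcast, ← hkμ, hq]
        have hne : ((k : ℝ) + 1) ≠ 0 := by positivity
        match_scalars <;> (field_simp; try ring)
      obtain ⟨l, hl⟩ := exists_le_weighted α hα0 hα1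
        (fun l => ‖((k + 1 : ℕ) : ℝ)⁻¹ •
          (∑ t : Fin (k+1), v (Fin.snoc (α := fun _ => ι) g l t)) - p‖ ^ 2)
      refine ⟨Fin.snoc (α := fun _ => ι) g l, le_trans hl ?_⟩
      have hterm : ∀ l' : ι,
          α l' * ‖((k + 1 : ℕ) : ℝ)⁻¹ •
            (∑ t : Fin (k+1), v (Fin.snoc (α := fun _ => ι) g l' t)) - p‖ ^ 2
          = (((k : ℝ) + 1)⁻¹) ^ 2 * (α l' * ‖q‖ ^ 2
              + 2 * (α l' * (inner ℝ q (v l' - p) : ℝ)) + α l' * ‖v l' - p‖ ^ 2) := by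
        intro l'
        rw [key l', norm_smul, Real.norm_eq_abs, mul_pow, sq_abs, @norm_add_sq_real]
        ring
      rw [Finset.sum_congr rfl fun l' _ => hterm l', ← Finset.mul_sum]
      have hzero : ∑ l', α l' • (v l' - p) = 0 := by
        have h5 : ∑ l', α l' • (v l' - p) = (∑ l', α l' • v l') - (∑ l', α l') • p := by
          rw [Finset.sum_smul, ← Finset.sum_sub_distrib]
          exact Finset.sum_congr rfl fun l' _ => smul_sub _ _ _
        rw [h5, hα1, one_smul, ← hp, sub_self]
      have hsplit : ∑ l', (α l' * ‖q‖ ^ 2 + 2 * (α l' * (inner ℝ q (v l' - p) : ℝ))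
            + α l' * ‖v l' - p‖ ^ 2)
          = ‖q‖ ^ 2 + ∑ l', α l' * ‖v l' - p‖ ^ 2 := by
        rw [Finset.sum_add_distrib, Finset.sum_add_distrib, ← Finset.sum_mul, hα1, one_mul]
        have h6 : ∑ l', 2 * (α l' * (inner ℝ q (v l' - p) : ℝ))
            = 2 * (inner ℝ q (∑ l', α l' • (v l' - p)) : ℝ) := by
          rw [inner_weighted (α := α) (v := fun l' => v l' - p) (w := q), Finset.mul_sum]
        rw [h6, hzero, inner_zero_right]
        ring
      rw [hsplit]
      have hnq : ‖q‖ ^ 2 = (k:ℝ)^2 * ‖μ - p‖^2 := by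
        rw [hq, norm_smul, Real.norm_eq_abs, mul_pow, sq_abs]
      have hd : ∀ l' : ι, α l' * ‖v l' - p‖ ^ 2 = α l' * ‖p - v l'‖ ^ 2 :=
        fun l' => by rw [norm_sub_rev]
      rw [Finset.sum_congr rfl fun l' _ => hd l', hnq]
      have hb1 : (k:ℝ)^2 * ‖μ - p‖^2 ≤ (k:ℝ) * (c ^ 2 - ‖p‖ ^ 2) := by
        have h7 : (k:ℝ)^2 * ‖μ - p‖^2 ≤ (k:ℝ)^2 * ((c ^ 2 - ‖p‖ ^ 2) / k) :=
          mul_le_mul_of_nonneg_left hg (by positivity)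
        calc (k:ℝ)^2 * ‖μ - p‖^2 ≤ (k:ℝ)^2 * ((c ^ 2 - ‖p‖ ^ 2) / k) := h7
          _ = (k:ℝ) * (c ^ 2 - ‖p‖ ^ 2) := by field_simp
      have hb2 : (k:ℝ)^2 * ‖μ - p‖^2 + ∑ l', α l' * ‖p - v l'‖ ^ 2
          ≤ ((k:ℝ) + 1) * (c ^ 2 - ‖p‖ ^ 2) := by
        have := hVar
        nlinarith
      have hpos1 : (0:ℝ) < (k:ℝ) + 1 := by positivity
      calc (((k:ℝ) + 1)⁻¹)^2 * ((k:ℝ)^2 * ‖μ - p‖^2 + ∑ l', α l' * ‖p - v l'‖ ^ 2)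
          ≤ (((k:ℝ) + 1)⁻¹)^2 * (((k:ℝ) + 1) * (c ^ 2 - ‖p‖ ^ 2)) :=
            mul_le_mul_of_nonneg_left hb2 (by positivity)
        _ = (c ^ 2 - ‖p‖ ^ 2) / ((k + 1 : ℕ) : ℝ) := by
            push_cast
            field_simp
end maurey

section maurey2
variable {E : Type*} [NormedAddCommGroup E] [InnerProductSpace ℝ E]
variable {ι : Type*} [Fintype ι]

lemma norm_p_le (α : ι → ℝ) (hα0 : ∀ l, 0 ≤ α l) (hα1 : ∑ l, α l = 1)
    (v : ι → E) (c : ℝ) (hv : ∀ l, ‖v l‖ ≤ c) {p : E} (hp : p = ∑ l, α l • v l) :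
    ‖p‖ ≤ c := by
  rw [hp]
  calc ‖∑ l, α l • v l‖ ≤ ∑ l, ‖α l • v l‖ := norm_sum_le _ _
    _ = ∑ l, α l * ‖v l‖ := by
        refine Finset.sum_congr rfl fun l _ => ?_
        rw [norm_smul, Real.norm_eq_abs, abs_of_nonneg (hα0 l)]
    _ ≤ ∑ l, α l * c := by
        refine Finset.sum_le_sum fun l _ => mul_le_mul_of_nonneg_left (hv l) (hα0 l)
    _ = c := by rw [← Finset.sum_mul, hα1, one_mul]

lemma maurey_center (α : ι → ℝ) (hα0 : ∀ l, 0 ≤ α l) (hα1 : ∑ l, α l = 1)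
    (v : ι → E) (c : ℝ) (hv : ∀ l, ‖v l‖ ≤ c) {p : E} (hp : p = ∑ l, α l • v l)
    (k : ℕ) (hk : 1 ≤ k) :
    ∃ g : Fin k → ι, ‖((k : ℝ) + 1)⁻¹ • (∑ t, v (g t)) - p‖ ≤ c / Real.sqrt ((k : ℝ) + 1) := by
  obtain ⟨g, hg⟩ := maurey_sq α hα0 hα1 v c hv hp k hk
  refine ⟨g, ?_⟩
  set μ := (k : ℝ)⁻¹ • (∑ t, v (g t)) with hμ
  have hkpos : (0 : ℝ) < k := by exact_mod_cast Nat.pos_of_ne_zero (by omega)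
  have hkμ : (k : ℝ) • μ = ∑ t, v (g t) := by
    rw [hμ, smul_smul, mul_inv_cancel₀ (ne_of_gt hkpos), one_smul]
  set m := ‖μ - p‖ with hm
  set θ := ‖p‖ with hθ
  have hθc : θ ≤ c := norm_p_le α hα0 hα1 v c hv hp
  have hc : 0 ≤ c := le_trans (norm_nonneg _) hθc
  have hm0 : 0 ≤ m := norm_nonneg _
  have hθ0 : 0 ≤ θ := norm_nonneg _
  have hk1 : (0:ℝ) < (k:ℝ) + 1 := by positivity
  have hm2 : (k:ℝ) * m ^ 2 ≤ c ^ 2 - θ ^ 2 := by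
    have := mul_le_mul_of_nonneg_left hg (le_of_lt hkpos)
    calc (k:ℝ) * m ^ 2 ≤ (k:ℝ) * ((c ^ 2 - θ ^ 2) / k) := this
      _ = c ^ 2 - θ ^ 2 := by field_simp
  have hdec : ((k : ℝ) + 1)⁻¹ • (∑ t, v (g t)) - p
      = (((k : ℝ) + 1)⁻¹ * k) • (μ - p) - ((k : ℝ) + 1)⁻¹ • p := by
    rw [← hkμ]
    match_scalars <;> (field_simp; try ring)
  have hnorm1 : ‖((k : ℝ) + 1)⁻¹ • (∑ t, v (g t)) - p‖
      ≤ ((k:ℝ) * m + θ) / ((k:ℝ) + 1) := by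
    rw [hdec]
    calc ‖(((k : ℝ) + 1)⁻¹ * k) • (μ - p) - ((k : ℝ) + 1)⁻¹ • p‖
        ≤ ‖(((k : ℝ) + 1)⁻¹ * k) • (μ - p)‖ + ‖((k : ℝ) + 1)⁻¹ • p‖ := norm_sub_le _ _
      _ = (((k : ℝ) + 1)⁻¹ * k) * m + ((k : ℝ) + 1)⁻¹ * θ := by
          rw [norm_smul, norm_smul, Real.norm_eq_abs, Real.norm_eq_abs,
            abs_of_nonneg (by positivity), abs_of_nonneg (by positivity)]
      _ = ((k:ℝ) * m + θ) / ((k:ℝ) + 1) := by field_simp; try ring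
  have hsq : Real.sqrt ((k:ℝ) + 1) ^ 2 = (k:ℝ) + 1 := Real.sq_sqrt (le_of_lt hk1)
  have hsqpos : 0 < Real.sqrt ((k:ℝ) + 1) := Real.sqrt_pos.2 hk1
  have hkey : (k:ℝ) * m + θ ≤ c * Real.sqrt ((k:ℝ) + 1) := by
    have h8 : ((k:ℝ) * m + θ) ^ 2 ≤ ((k:ℝ) + 1) * c ^ 2 := by nlinarith [sq_nonneg (m - θ)]
    nlinarith [mul_nonneg hc (le_of_lt hsqpos), sq_nonneg ((k:ℝ)*m + θ)]
  calc ‖((k : ℝ) + 1)⁻¹ • (∑ t, v (g t)) - p‖ ≤ ((k:ℝ) * m + θ) / ((k:ℝ) + 1) := hnorm1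
    _ ≤ (c * Real.sqrt ((k:ℝ) + 1)) / ((k:ℝ) + 1) := by gcongr
    _ = c / Real.sqrt ((k:ℝ) + 1) := by
        rw [eq_div_iff (ne_of_gt hsqpos)]
        field_simp
        nlinarith [hsq]
end maurey2


section projx
variable {E : Type*} [NormedAddCommGroup E] [InnerProductSpace ℝ E]

lemma exists_proj_contract {S : Set E} (hne : S.Nonempty) (hcomp : IsComplete S)
    (hconv : Convex ℝ S) (z : E) : ∃ y ∈ S, ∀ p ∈ S, ‖y - p‖ ≤ ‖z - p‖ := by
  obtain ⟨y, hyS, hy⟩ := exists_norm_eq_iInf_of_complete_convex hne hcomp hconv z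
  have hchar := (norm_eq_iInf_iff_real_inner_le_zero hconv hyS).1 hy
  refine ⟨y, hyS, fun p hp => ?_⟩
  have h1 : (inner ℝ (z - y) (p - y) : ℝ) ≤ 0 := hchar p hp
  have hexp : ‖z - p‖ ^ 2 = ‖z - y‖ ^ 2 + 2 * (inner ℝ (z - y) (y - p) : ℝ) + ‖y - p‖ ^ 2 := by
    have hzp : z - p = (z - y) + (y - p) := by abel
    rw [hzp, @norm_add_sq_real]
  have h2 : 0 ≤ (inner ℝ (z - y) (y - p) : ℝ) := by
    have hne : (inner ℝ (z - y) (y - p) : ℝ) = -(inner ℝ (z - y) (p - y) : ℝ) := by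
      rw [← inner_neg_right]
      congr 1
      abel
    rw [hne]
    linarith
  nlinarith [norm_nonneg (z - y), norm_nonneg (y - p), norm_nonneg (z - p)]

end projx

section feassec
variable {a m n : ℕ}

lemma euclNorm_add_le {k : ℕ} (u w : Fin k → ℝ) :
    euclNorm (u + w) ≤ euclNorm u + euclNorm w := by
  rw [euclNorm_eq, euclNorm_eq, euclNorm_eq, map_add]
  exact norm_add_le _ _

lemma frobNorm_add_le (A B : Matrix (Fin a) (Fin m) ℝ) :
    frobNorm (A + B) ≤ frobNorm A + frobNorm B := by
  rw [frobNorm_eq, frobNorm_eq, frobNorm_eq, map_add]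
  exact norm_add_le _ _

def feas (s b : ℝ) (M : Matrix (Fin a) (Fin m) ℝ) : Set (Matrix (Fin a) (Fin m) ℝ) :=
  {A | specNorm A ≤ s ∧ norm21 (A - M).transpose ≤ b}

lemma feas_convex (s b : ℝ) (M : Matrix (Fin a) (Fin m) ℝ) : Convex ℝ (feas s b M) := by
  intro A1 h1 A2 h2 t r ht hr htr
  constructor
  · rw [specNorm_le_iff]
    intro x hx
    have hmv : (t • A1 + r • A2).mulVec x = t • A1.mulVec x + r • A2.mulVec x := by
      rw [Matrix.add_mulVec, Matrix.smul_mulVec, Matrix.smul_mulVec]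
    rw [hmv]
    calc euclNorm (t • A1.mulVec x + r • A2.mulVec x)
        ≤ euclNorm (t • A1.mulVec x) + euclNorm (r • A2.mulVec x) := euclNorm_add_le _ _
      _ = t * euclNorm (A1.mulVec x) + r * euclNorm (A2.mulVec x) := by
          rw [euclNorm_smul, euclNorm_smul, abs_of_nonneg ht, abs_of_nonneg hr]
      _ ≤ t * s + r * s := by
          refine add_le_add (mul_le_mul_of_nonneg_left ?_ ht)
            (mul_le_mul_of_nonneg_left ?_ hr)
          · exact euclNorm_mulVec_le_spec h1.1 x |>.trans (by
              nlinarith [specNorm_nonneg A1, h1.1, euclNorm_nonneg' x])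
          · exact euclNorm_mulVec_le_spec h2.1 x |>.trans (by
              nlinarith [specNorm_nonneg A2, h2.1, euclNorm_nonneg' x])
      _ = s := by rw [← add_mul, htr, one_mul]
  · have hdec : t • A1 + r • A2 - M = t • (A1 - M) + r • (A2 - M) := by
      have h9 : t • M + r • M = M := by rw [← add_smul, htr, one_smul]
      rw [← h9]
      match_scalars <;> first
        | ring1
        | linear_combination (t + r) * htr
    rw [norm21_transpose_eq] at *
    rw [hdec]
    calc ∑ i, euclNorm ((t • (A1 - M) + r • (A2 - M)) i)
        ≤ ∑ i, (t * euclNorm ((A1 - M) i) + r * euclNorm ((A2 - M) i)) := by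
          refine Finset.sum_le_sum fun i _ => ?_
          have happ : (t • (A1 - M) + r • (A2 - M)) i
              = t • ((A1 - M) i) + r • ((A2 - M) i) := rfl
          rw [happ]
          calc euclNorm (t • ((A1 - M) i) + r • ((A2 - M) i))
              ≤ euclNorm (t • ((A1 - M) i)) + euclNorm (r • ((A2 - M) i)) :=
                euclNorm_add_le _ _
            _ = t * euclNorm ((A1 - M) i) + r * euclNorm ((A2 - M) i) := by
                rw [euclNorm_smul, euclNorm_smul, abs_of_nonneg ht, abs_of_nonneg hr]
      _ = t * (∑ i, euclNorm ((A1 - M) i)) + r * (∑ i, euclNorm ((A2 - M) i)) := by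
          rw [Finset.sum_add_distrib, Finset.mul_sum, Finset.mul_sum]
      _ ≤ t * b + r * b := by
          refine add_le_add (mul_le_mul_of_nonneg_left h1.2 ht)
            (mul_le_mul_of_nonneg_left h2.2 hr)
      _ = b := by rw [← add_mul, htr, one_mul]

lemma feas_closed (s b : ℝ) (M : Matrix (Fin a) (Fin m) ℝ) : IsClosed (feas s b M) := by
  have heq : feas s b M = {A : Matrix (Fin a) (Fin m) ℝ | specNorm A ≤ s}
      ∩ {A | norm21 (A - M).transpose ≤ b} := rfl
  rw [heq]
  refine IsClosed.inter ?_ ?_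
  · have h2 : {A : Matrix (Fin a) (Fin m) ℝ | specNorm A ≤ s}
        = ⋂ x : {x : Fin m → ℝ // euclNorm x ≤ 1}, {A | euclNorm (A.mulVec x.1) ≤ s} := by
      ext A
      simp only [Set.mem_setOf_eq, Set.mem_iInter]
      constructor
      · intro h x
        exact specNorm_le_iff.1 h x.1 x.2
      · intro h
        exact specNorm_le_iff.2 fun x hx => h ⟨x, hx⟩
    rw [h2]
    refine isClosed_iInter fun x => ?_
    refine isClosed_le ?_ continuous_const
    unfold euclNorm
    refine Real.continuous_sqrt.comp (continuous_finset_sum _ fun i _ => ?_)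
    have hmv : Continuous fun A : Matrix (Fin a) (Fin m) ℝ => A.mulVec x.1 i := by
      unfold Matrix.mulVec dotProduct
      refine continuous_finset_sum _ fun j _ => ?_
      exact (continuous_id.matrix_elem i j).mul continuous_const
    exact hmv.pow 2
  · refine isClosed_le ?_ continuous_const
    unfold norm21
    refine continuous_finset_sum _ fun j _ => ?_
    refine Real.continuous_sqrt.comp (continuous_finset_sum _ fun i _ => ?_)
    have : Continuous fun A : Matrix (Fin a) (Fin m) ℝ => A j i - M j i :=
      (continuous_id.matrix_elem j i).sub continuous_const
    simpa [Matrix.transpose_apply, Matrix.sub_apply] using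
      (show Continuous fun A : Matrix (Fin a) (Fin m) ℝ => (A j i - M j i) ^ 2 from this.pow 2)

noncomputable def matEquiv (a b : ℕ) :
    Matrix (Fin a) (Fin b) ℝ ≃ₗ[ℝ] EuclideanSpace ℝ (Fin a × Fin b) where
  toFun A := (WithLp.equiv 2 _).symm (fun p => A p.1 p.2)
  invFun x := Matrix.of (fun i j => x (i, j))
  map_add' _ _ := rfl
  map_smul' _ _ := rfl
  left_inv _ := rfl
  right_inv _ := rfl

lemma matEquiv_eq_matL (A : Matrix (Fin a) (Fin m) ℝ) : matEquiv a m A = matL a m A := rfl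

lemma feas_compact (s b : ℝ) (hb : 0 ≤ b) (M : Matrix (Fin a) (Fin m) ℝ) :
    IsCompact (feas s b M) := by
  have hcl : IsClosed (feas s b M) := feas_closed s b M
  set eC := LinearEquiv.toContinuousLinearEquiv (matEquiv a m)
  have himg : IsCompact (eC '' feas s b M) := by
    have hclosed' : IsClosed (eC '' feas s b M) :=
      eC.toHomeomorph.isClosedMap _ hcl
    have hsub : eC '' feas s b M ⊆ Metric.closedBall 0 (frobNorm M + b) := by
      rintro y ⟨A, hA, rfl⟩
      rw [Metric.mem_closedBall, dist_zero_right]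
      have hy : ‖eC A‖ = frobNorm A := by
        have : eC A = matL a m A := rfl
        rw [this, ← frobNorm_eq]
      rw [hy]
      have hAM : A = M + (A - M) := by abel
      calc frobNorm A = frobNorm (M + (A - M)) := by rw [← hAM]
        _ ≤ frobNorm M + frobNorm (A - M) := frobNorm_add_le _ _
        _ ≤ frobNorm M + norm21 (A - M).transpose := by
            linarith [frob_le_norm21T (A - M)]
        _ ≤ frobNorm M + b := by linarith [hA.2]
    exact (isCompact_closedBall 0 _).of_isClosed_subset hclosed' hsub
  have := himg.image eC.symm.continuous
  rw [Set.image_image] at this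
  simpa using this

end feassec

section layersec
set_option maxHeartbeats 1000000

noncomputable def Tmap (a m n : ℕ) (Y : Matrix (Fin m) (Fin n) ℝ) :
    Matrix (Fin a) (Fin m) ℝ →ₗ[ℝ] EuclideanSpace ℝ (Fin a × Fin n) where
  toFun A := matL a n (A * Y)
  map_add' A B := by
    show matL a n ((A + B) * Y) = matL a n (A * Y) + matL a n (B * Y)
    rw [Matrix.add_mul, map_add]
  map_smul' c A := by
    show matL a n ((c • A) * Y) = c • matL a n (A * Y)
    rw [Matrix.smul_mul, map_smul]

variable {a m n : ℕ}

lemma frobNorm_neg (A : Matrix (Fin a) (Fin m) ℝ) : frobNorm (-A) = frobNorm A := by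
  rw [frobNorm_eq, frobNorm_eq, map_neg, norm_neg]

lemma Tmap_bridge (Y : Matrix (Fin m) (Fin n) ℝ) (A B : Matrix (Fin a) (Fin m) ℝ) :
    frobNorm (A * Y - B * Y) = ‖Tmap a m n Y A - Tmap a m n Y B‖ := by
  have h1 : Tmap a m n Y A - Tmap a m n Y B = matL a n (A * Y - B * Y) := by
    rw [← map_sub]
    show matL a n ((A - B) * Y) = _
    rw [Matrix.sub_mul]
  rw [h1, ← frobNorm_eq]

lemma std_mul_apply (Y : Matrix (Fin m) (Fin n) ℝ) (i : Fin a) (j : Fin m)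
    (i' : Fin a) (j' : Fin n) :
    ((Matrix.single i j (1:ℝ)) * Y) i' j' = if i = i' then Y j j' else 0 := by
  rw [Matrix.mul_apply]
  simp only [Matrix.single, Matrix.of_apply, ite_and, boole_mul, ite_mul, one_mul,
    zero_mul]
  by_cases h : i = i'
  · subst h
    simp
  · simp [h]

lemma norm_u (Y : Matrix (Fin m) (Fin n) ℝ) (i : Fin a) (j : Fin m) :
    ‖matL a n ((Matrix.single i j (1:ℝ)) * Y)‖ = euclNorm (Y j) := by
  rw [← frobNorm_eq]
  unfold frobNorm euclNorm
  congr 1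
  have h1 : ∀ i' : Fin a, ∑ j' , ((Matrix.single i j (1:ℝ)) * Y) i' j' ^ 2
      = if i = i' then ∑ j', Y j j' ^ 2 else 0 := by
    intro i'
    by_cases h : i = i'
    · subst h
      simp [std_mul_apply]
    · simp [std_mul_apply, h]
  rw [Finset.sum_congr rfl fun i' _ => h1 i']
  rw [Finset.sum_ite_eq]
  simp

lemma beta_mul_eq_sum (Y : Matrix (Fin m) (Fin n) ℝ) (β : Matrix (Fin a) (Fin m) ℝ) :
    β * Y = ∑ i, ∑ j, β i j • ((Matrix.single i j (1:ℝ)) * Y) := by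
  conv_lhs => rw [Matrix.matrix_eq_sum_single β]
  rw [Matrix.sum_mul]
  refine Finset.sum_congr rfl fun i _ => ?_
  rw [Matrix.sum_mul]
  refine Finset.sum_congr rfl fun j _ => ?_
  rw [← Matrix.smul_mul]
  congr 1
  rw [Matrix.smul_single, smul_eq_mul, mul_one]

lemma layer_cover (W : ℕ) (haW : a ≤ W) (hmW : m ≤ W) (hW1 : 1 ≤ W)
    (s b : ℝ) (hs : 0 < s) (hb : 0 < b) (M : Matrix (Fin a) (Fin m) ℝ)
    (hK : (feas s b M).Nonempty)
    (Y : Matrix (Fin m) (Fin n) ℝ) (R : ℝ) (hY : frobNorm Y ≤ R)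
    (ε : ℝ) (hε : 0 < ε) :
    ∃ F : Finset (Matrix (Fin a) (Fin m) ℝ),
      F.Nonempty
      ∧ (∀ B ∈ F, B ∈ feas s b M)
      ∧ (∀ A ∈ feas s b M, ∃ B ∈ F, frobNorm (A * Y - B * Y) ≤ ε)
      ∧ (F.card : ℝ) ≤ (2 * (W:ℝ)^2) ^ ((b * R / ε)^2 : ℝ) := by
  classical
  have hR : 0 ≤ R := le_trans (frobNorm_nonneg Y) hY
  set c := b * R with hc
  have hbase : (1:ℝ) ≤ 2 * (W:ℝ)^2 := by
    have hW : (1:ℝ) ≤ (W:ℝ) := by exact_mod_cast hW1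
    nlinarith
  have hcard1 : ∀ B0 : Matrix (Fin a) (Fin m) ℝ,
      (({B0} : Finset (Matrix (Fin a) (Fin m) ℝ)).card : ℝ)
        ≤ (2 * (W:ℝ)^2) ^ ((b * R / ε)^2 : ℝ) := by
    intro B0
    calc (({B0} : Finset (Matrix (Fin a) (Fin m) ℝ)).card : ℝ) = 1 := by simp
      _ = (2 * (W:ℝ)^2) ^ (0:ℝ) := (Real.rpow_zero _).symm
      _ ≤ (2 * (W:ℝ)^2) ^ ((b * R / ε)^2 : ℝ) :=
          Real.rpow_le_rpow_of_exponent_le hbase (sq_nonneg _)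
  -- the image set and projections
  set S : Set (EuclideanSpace ℝ (Fin a × Fin n)) := (Tmap a m n Y) '' (feas s b M) with hSdef
  have hSne : S.Nonempty := hK.image _
  have hSconv : Convex ℝ S := (feas_convex s b M).linear_image _
  have hScomp : IsComplete S :=
    ((feas_compact s b (le_of_lt hb) M).image
      (Tmap a m n Y).continuous_of_finiteDimensional).isComplete
  have hproj : ∀ z, ∃ B ∈ feas s b M, ∀ A' ∈ feas s b M,
      ‖Tmap a m n Y B - Tmap a m n Y A'‖ ≤ ‖z - Tmap a m n Y A'‖ := by
    intro z
    obtain ⟨y, hyS, hy⟩ := exists_proj_contract hSne hScomp hSconv z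
    obtain ⟨B, hB, rfl⟩ := hyS
    exact ⟨B, hB, fun A' hA' => hy _ ⟨A', hA', rfl⟩⟩
  by_cases hbig : c ≤ ε
  · -- single center: projection of M
    obtain ⟨B0, hB0, hB0p⟩ := hproj (Tmap a m n Y M)
    refine ⟨{B0}, Finset.singleton_nonempty _, ?_, ?_, hcard1 B0⟩
    · intro B hB
      rw [Finset.mem_singleton] at hB
      subst hB
      exact hB0
    · intro A hA
      refine ⟨B0, Finset.mem_singleton_self B0, ?_⟩
      rw [Tmap_bridge, norm_sub_rev]
      refine le_trans (hB0p A hA) ?_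
      rw [← Tmap_bridge]
      have h2 : M * Y - A * Y = -((A - M) * Y) := by
        rw [Matrix.sub_mul]
        abel
      rw [h2, frobNorm_neg]
      calc frobNorm ((A - M) * Y) ≤ norm21 (A - M).transpose * frobNorm Y :=
            frob_mul_le_norm21 _ _
        _ ≤ b * R := by
            have h3 := hA.2
            have h4 := norm21_nonneg (A - M).transpose
            nlinarith [frobNorm_nonneg Y]
        _ ≤ ε := hbig
  · push_neg at hbig
    have hc0 : 0 < c := lt_trans hε hbig
    by_cases hdm : a * m = 0
    · -- degenerate sizes: all A * Y are equal
      obtain ⟨A0, hA0⟩ := hK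
      have hallz : ∀ A B : Matrix (Fin a) (Fin m) ℝ, A * Y - B * Y = 0 := by
        intro A B
        rcases Nat.mul_eq_zero.1 hdm with h | h
        · subst h
          ext i j
          exact i.elim0
        · subst h
          ext i j
          simp [Matrix.mul_apply]
      refine ⟨{A0}, Finset.singleton_nonempty _, ?_, ?_, hcard1 A0⟩
      · intro B hB
        rw [Finset.mem_singleton] at hB
        subst hB
        exact hA0
      · intro A hA
        refine ⟨A0, Finset.mem_singleton_self A0, ?_⟩
        rw [hallz A A0, frobNorm_zero]
        exact le_of_lt hε
    · have ha : 0 < a := Nat.pos_of_ne_zero fun h => hdm (by rw [h]; ring)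
      have hm : 0 < m := Nat.pos_of_ne_zero fun h => hdm (by rw [h]; ring)
      set x : ℝ := (c / ε)^2 with hx
      have hcε : 1 < c / ε := (one_lt_div hε).2 hbig
      have hx1 : 1 < x := by nlinarith
      set k := Nat.ceil (x - 1) with hkdef
      have hk1 : 1 ≤ k := Nat.ceil_pos.2 (by linarith)
      have hkx : x ≤ (k:ℝ) + 1 := by
        have := Nat.le_ceil (x - 1)
        linarith
      have hkle : (k:ℝ) ≤ x := by
        have := Nat.ceil_lt_add_one (by linarith : (0:ℝ) ≤ x - 1)
        linarith
      -- Maurey vectors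
      set u : Fin a → Fin m → EuclideanSpace ℝ (Fin a × Fin n) :=
        fun i j => matL a n ((Matrix.single i j (1:ℝ)) * Y) with hu
      set v : (Fin a × Fin m) × Bool → EuclideanSpace ℝ (Fin a × Fin n) :=
        fun l => ((if l.2 then (1:ℝ) else -1)
          * (if euclNorm (Y l.1.2) = 0 then 0 else c / euclNorm (Y l.1.2))) • u l.1.1 l.1.2
        with hv
      have hvnorm : ∀ l, ‖v l‖ ≤ c := by
        rintro ⟨⟨i, j⟩, sg⟩
        show ‖((if sg then (1:ℝ) else -1)
          * (if euclNorm (Y j) = 0 then 0 else c / euclNorm (Y j))) • u i j‖ ≤ c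
        rw [norm_smul, Real.norm_eq_abs, norm_u]
        rcases eq_or_ne (euclNorm (Y j)) 0 with h0 | h0
        · rw [h0]
          simp [le_of_lt hc0]
        · have hypos : 0 < euclNorm (Y j) := lt_of_le_of_ne (euclNorm_nonneg' _) (Ne.symm h0)
          rw [if_neg h0, abs_mul]
          have h1 : |if sg then (1:ℝ) else -1| = 1 := by cases sg <;> simp
          rw [h1, one_mul, abs_of_nonneg (le_of_lt (div_pos hc0 hypos))]
          rw [div_mul_cancel₀ _ (ne_of_gt hypos)]
      -- centers
      set ctr : (Fin k → (Fin a × Fin m) × Bool) → EuclideanSpace ℝ (Fin a × Fin n) :=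
        fun g => Tmap a m n Y M + ((k:ℝ) + 1)⁻¹ • (∑ t, v (g t)) with hctr
      have hsel : ∀ g : Fin k → (Fin a × Fin m) × Bool, ∃ B, B ∈ feas s b M ∧
          ∀ A' ∈ feas s b M,
            ‖Tmap a m n Y B - Tmap a m n Y A'‖ ≤ ‖ctr g - Tmap a m n Y A'‖ := by
        intro g
        obtain ⟨B, hB1, hB2⟩ := hproj (ctr g)
        exact ⟨B, hB1, hB2⟩
      choose Bsel hBfeas hBprop using hsel
      set F := Finset.image Bsel Finset.univ with hF
      have hFne : F.Nonempty := by
        refine ⟨Bsel (fun _ => ((⟨0, ha⟩, ⟨0, hm⟩), true)), ?_⟩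
        exact Finset.mem_image_of_mem _ (Finset.mem_univ _)
      refine ⟨F, hFne, ?_, ?_, ?_⟩
      · intro B hB
        rw [hF, Finset.mem_image] at hB
        obtain ⟨g, _, rfl⟩ := hB
        exact hBfeas g
      · -- covering
        intro A hA
        set β := A - M with hβ
        set G := ∑ i, ∑ j, |β i j| * euclNorm (Y j) / c with hG
        have hGle : G ≤ 1 := by
          rw [hG]
          have h1 : ∑ i, ∑ j, |β i j| * euclNorm (Y j) / c
              = (∑ i, ∑ j, |β i j| * euclNorm (Y j)) / c := by
            rw [Finset.sum_div]
            exact Finset.sum_congr rfl fun i _ => by rw [Finset.sum_div]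
          rw [h1, div_le_one hc0]
          calc ∑ i, ∑ j, |β i j| * euclNorm (Y j) ≤ norm21 β.transpose * frobNorm Y :=
              sum_abs_mul_le β Y
            _ ≤ b * R := by
                have h3 := hA.2
                rw [← hβ] at h3
                nlinarith [norm21_nonneg β.transpose, frobNorm_nonneg Y]
        have hG0 : 0 ≤ G := by
          rw [hG]
          refine Finset.sum_nonneg fun i _ => Finset.sum_nonneg fun j _ => ?_
          have := euclNorm_nonneg' (Y j)
          positivity
        set pad := (1 - G) / (2 * a * m) with hpad
        have hpad0 : 0 ≤ pad := by
          rw [hpad]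
          have h2am : (0:ℝ) < 2 * a * m := by positivity
          exact div_nonneg (by linarith) (le_of_lt h2am)
        set αw : (Fin a × Fin m) × Bool → ℝ := fun l =>
          (if l.2 then max (β l.1.1 l.1.2) 0 else max (-(β l.1.1 l.1.2)) 0)
            * euclNorm (Y l.1.2) / c + pad with hαw
        have hα0 : ∀ l, 0 ≤ αw l := by
          rintro ⟨⟨i, j⟩, sg⟩
          show 0 ≤ (if sg then max (β i j) 0 else max (-(β i j)) 0) * euclNorm (Y j) / c + pad
          have hnn : (0:ℝ) ≤ (if sg then max (β i j) 0 else max (-(β i j)) 0) := by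
            cases sg <;> simp [le_max_right]
          have h3 := euclNorm_nonneg' (Y j)
          have h4 : 0 ≤ (if sg then max (β i j) 0 else max (-(β i j)) 0)
              * euclNorm (Y j) / c := by positivity
          linarith
        have hα1 : ∑ l, αw l = 1 := by
          rw [Fintype.sum_prod_type]
          have hrow : ∀ p : Fin a × Fin m, ∑ sg : Bool, αw (p, sg)
              = |β p.1 p.2| * euclNorm (Y p.2) / c + 2 * pad := by
            intro p
            rw [Fintype.sum_bool]
            have habs : max (β p.1 p.2) 0 + max (-(β p.1 p.2)) 0 = |β p.1 p.2| :=
              max_zero_add_max_neg_zero_eq_abs_self _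
            show (max (β p.1 p.2) 0) * euclNorm (Y p.2) / c + pad
                + ((max (-(β p.1 p.2)) 0) * euclNorm (Y p.2) / c + pad)
                = |β p.1 p.2| * euclNorm (Y p.2) / c + 2 * pad
            linear_combination (euclNorm (Y p.2) / c) * habs
          rw [Finset.sum_congr rfl fun p _ => hrow p]
          rw [Finset.sum_add_distrib]
          have hc2 : ∑ _p : Fin a × Fin m, 2 * pad = 2 * (a * m) * pad := by
            rw [Finset.sum_const]
            simp [Fintype.card_prod]
            ring
          rw [hc2]
          have hc3 : ∑ p : Fin a × Fin m, |β p.1 p.2| * euclNorm (Y p.2) / c = G := by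
            rw [hG, Fintype.sum_prod_type]
          rw [hc3, hpad]
          have h2am : (2 * (a:ℝ) * m) ≠ 0 := by positivity
          field_simp
          ring
        have hrep : Tmap a m n Y A - Tmap a m n Y M = ∑ l, αw l • v l := by
          have h5 : Tmap a m n Y A - Tmap a m n Y M = matL a n (β * Y) := by
            rw [← map_sub]
            show matL a n ((A - M) * Y) = _
            rw [hβ]
          rw [h5, beta_mul_eq_sum, map_sum]
          rw [Fintype.sum_prod_type, Fintype.sum_prod_type]
          refine Finset.sum_congr rfl fun i _ => ?_
          rw [map_sum]
          refine Finset.sum_congr rfl fun j _ => ?_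
          rw [map_smul, Fintype.sum_bool]
          show β i j • u i j
              = ((max (β i j) 0) * euclNorm (Y j) / c + pad)
                  • (((1:ℝ) * if euclNorm (Y j) = 0 then 0 else c / euclNorm (Y j)) • u i j)
                + ((max (-(β i j)) 0) * euclNorm (Y j) / c + pad)
                  • (((-1:ℝ) * if euclNorm (Y j) = 0 then 0 else c / euclNorm (Y j)) • u i j)
          rcases eq_or_ne (euclNorm (Y j)) 0 with h0 | h0
          · have hu0 : u i j = 0 := by
              have h7 : ‖u i j‖ = euclNorm (Y j) := norm_u Y i j
              rw [h0] at h7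
              exact norm_eq_zero.1 h7
            rw [hu0]
            simp
          · rw [if_neg h0]
            rw [smul_smul, smul_smul, ← add_smul]
            congr 1
            have hypos : 0 < euclNorm (Y j) := lt_of_le_of_ne (euclNorm_nonneg' _) (Ne.symm h0)
            have hmz : max (β i j) 0 - max (-(β i j)) 0 = β i j := by
              rcases le_total (β i j) 0 with h | h
              · rw [max_eq_right h, max_eq_left (by linarith)]
                ring
              · rw [max_eq_left h, max_eq_right (by linarith)]
                ring
            have hN : max (-(β i j)) 0 = max (β i j) 0 - β i j := by linarith
            rw [hN]
            field_simp
            ring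
        obtain ⟨g, hg⟩ := maurey_center αw hα0 hα1 v c hvnorm hrep k hk1
        refine ⟨Bsel g, Finset.mem_image_of_mem _ (Finset.mem_univ _), ?_⟩
        rw [Tmap_bridge, norm_sub_rev]
        refine le_trans (hBprop g A hA) ?_
        have hctrA : ctr g - Tmap a m n Y A
            = ((k:ℝ) + 1)⁻¹ • (∑ t, v (g t)) - (Tmap a m n Y A - Tmap a m n Y M) := by
          rw [hctr]
          abel_nf
          rw [add_assoc]
        rw [hctrA]
        refine le_trans hg ?_
        -- c / sqrt (k+1) ≤ ε
        have hsqx : Real.sqrt x = c / ε := by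
          rw [hx, Real.sqrt_sq (le_of_lt (div_pos hc0 hε))]
        have hsqk : c / ε ≤ Real.sqrt ((k:ℝ) + 1) := by
          rw [← hsqx]
          exact Real.sqrt_le_sqrt hkx
        have hsqkpos : 0 < Real.sqrt ((k:ℝ) + 1) := by
          refine Real.sqrt_pos.2 (by positivity)
        calc c / Real.sqrt ((k:ℝ) + 1) ≤ c / (c / ε) :=
            div_le_div_of_nonneg_left (le_of_lt hc0) (div_pos hc0 hε) hsqk
          _ = ε := by field_simp
      · -- cardinality
        have h6 : F.card ≤ (2 * W^2)^k := by
          calc F.card ≤ (Finset.univ : Finset (Fin k → (Fin a × Fin m) × Bool)).card :=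
              Finset.card_image_le
            _ = (2 * (a * m))^k := by
                rw [Finset.card_univ, Fintype.card_fun, Fintype.card_prod, Fintype.card_prod,
                  Fintype.card_bool, Fintype.card_fin, Fintype.card_fin, Fintype.card_fin]
                ring
            _ ≤ (2 * W^2)^k := by
                refine Nat.pow_le_pow_left ?_ k
                have : a * m ≤ W * W := Nat.mul_le_mul haW hmW
                calc 2 * (a * m) ≤ 2 * (W * W) := by omega
                  _ = 2 * W^2 := by ring
        calc (F.card : ℝ) ≤ (((2 * W^2)^k : ℕ) : ℝ) := Nat.cast_le.mpr h6
          _ = (2 * (W:ℝ)^2) ^ ((k:ℕ) : ℝ) := by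
              rw [Real.rpow_natCast]
              push_cast
              ring
          _ ≤ (2 * (W:ℝ)^2) ^ ((b * R / ε)^2 : ℝ) := by
              refine Real.rpow_le_rpow_of_exponent_le hbase ?_
              rw [← hc, ← hx]
              exact hkle

end layersec

section netsec

variable (d : ℕ → ℕ) (n : ℕ)
  (σ : ∀ j : ℕ, Matrix (Fin (d (j + 1))) (Fin n) ℝ → Matrix (Fin (d (j + 1))) (Fin n) ℝ)
  (X : Matrix (Fin n) (Fin (d 0)) ℝ)

lemma netF_congr (A A' : ∀ j : ℕ, Matrix (Fin (d (j + 1))) (Fin (d j)) ℝ) :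
    ∀ i : ℕ, (∀ j, j < i → A j = A' j) → netF d n σ A X i = netF d n σ A' X i := by
  intro i
  induction i with
  | zero => intro _; rfl
  | succ i ih =>
    intro h
    show σ i (A i * netF d n σ A X i) = σ i (A' i * netF d n σ A' X i)
    rw [h i (Nat.lt_succ_self i), ih (fun j hj => h j (Nat.lt_succ_of_lt hj))]

lemma netF_norm (ρ : ℕ → ℝ) (hρ0 : ∀ j, 0 ≤ ρ j)
    (hσ : ∀ j, ∀ Y Y', frobNorm (σ j Y - σ j Y') ≤ ρ j * frobNorm (Y - Y'))
    (hσ0 : ∀ j, σ j 0 = 0) (s : ℕ → ℝ)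
    (A : ∀ j : ℕ, Matrix (Fin (d (j + 1))) (Fin (d j)) ℝ) :
    ∀ i : ℕ, (∀ j, j < i → specNorm (A j) ≤ s j) →
      frobNorm (netF d n σ A X i) ≤ frobNorm X * ∏ j ∈ Finset.range i, (ρ j * s j) := by
  intro i
  induction i with
  | zero =>
    intro _
    show frobNorm X.transpose ≤ _
    rw [frobNorm_transpose, Finset.range_zero, Finset.prod_empty, mul_one]
  | succ i ih =>
    intro h
    have hspec := h i (Nat.lt_succ_self i)
    have hρ : 0 ≤ ρ i := hρ0 i
    have hs : 0 ≤ s i := le_trans (specNorm_nonneg _) hspec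
    show frobNorm (σ i (A i * netF d n σ A X i)) ≤ _
    have h3 : frobNorm (σ i (A i * netF d n σ A X i))
        ≤ ρ i * frobNorm (A i * netF d n σ A X i) := by
      have h4 := hσ i (A i * netF d n σ A X i) 0
      rw [hσ0 i, sub_zero, sub_zero] at h4
      exact h4
    have h5 : frobNorm (A i * netF d n σ A X i) ≤ s i * frobNorm (netF d n σ A X i) :=
      frob_mul_le_spec hspec _
    have h6 := ih (fun j hj => h j (Nat.lt_succ_of_lt hj))
    rw [Finset.prod_range_succ]
    have hXpr : 0 ≤ frobNorm X * ∏ j ∈ Finset.range i, (ρ j * s j) :=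
      le_trans (frobNorm_nonneg _) h6
    calc frobNorm (σ i (A i * netF d n σ A X i)) ≤ ρ i * frobNorm (A i * netF d n σ A X i) := h3
      _ ≤ ρ i * (s i * frobNorm (netF d n σ A X i)) :=
          mul_le_mul_of_nonneg_left h5 hρ
      _ ≤ ρ i * (s i * (frobNorm X * ∏ j ∈ Finset.range i, (ρ j * s j))) := by
          refine mul_le_mul_of_nonneg_left (mul_le_mul_of_nonneg_left h6 hs) hρ
      _ = frobNorm X * ((∏ j ∈ Finset.range i, (ρ j * s j)) * (ρ i * s i)) := by ring

lemma netF_zero_tail (hσ0 : ∀ j, σ j 0 = 0)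
    (A : ∀ j : ℕ, Matrix (Fin (d (j + 1))) (Fin (d j)) ℝ) (i0 : ℕ)
    (h0 : netF d n σ A X i0 = 0) :
    ∀ i, i0 ≤ i → netF d n σ A X i = 0 := by
  intro i
  induction i with
  | zero =>
    intro h
    have : i0 = 0 := Nat.le_zero.1 h
    rw [← this]
    exact h0
  | succ i ih =>
    intro h
    rcases Nat.eq_or_lt_of_le h with h1 | h1
    · rw [← h1]
      exact h0
    · have h2 := ih (by omega)
      show σ i (A i * netF d n σ A X i) = 0
      rw [h2, Matrix.mul_zero, hσ0 i]

end netsec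


set_option maxHeartbeats 2000000 in
/-- whole-network spectral covering bound: with ρ_i-Lipschitz σ_i fixing 0,
reference matrices M_i, spectral bounds s_i, (2,1)-norm bounds b_i, and all layer widths
at most W, the set H_X = {F_A(Xᵀ)} admits a proper ε-cover whose log-cardinality is at most
(‖X‖₂² ln(2W²)/ε²) (∏ s_j² ρ_j²) (Σ (b_i/s_i)^{2/3})³. -/
theorem spectral_covering_bound (L : ℕ) (hL : 0 < L) (d : ℕ → ℕ) (n W : ℕ)
    (hW : ∀ i, i ≤ L → d i ≤ W) (hn : n ≤ W)
    (σ : ∀ j : ℕ, Matrix (Fin (d (j + 1))) (Fin n) ℝ → Matrix (Fin (d (j + 1))) (Fin n) ℝ)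
    (ρ : ℕ → ℝ) (hρ : ∀ j, 0 ≤ ρ j)
    (hσ : ∀ j, ∀ Y Y', frobNorm (σ j Y - σ j Y') ≤ ρ j * frobNorm (Y - Y'))
    (hσ0 : ∀ j, σ j 0 = 0)
    (M : ∀ j : ℕ, Matrix (Fin (d (j + 1))) (Fin (d j)) ℝ)
    (s b : ℕ → ℝ) (hs : ∀ j, 0 < s j) (hb : ∀ j, 0 < b j)
    (X : Matrix (Fin n) (Fin (d 0)) ℝ)
    (ε : ℝ) (hε : 0 < ε) :
    ∃ C : Finset (Matrix (Fin (d L)) (Fin n) ℝ),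
      (↑C ⊆ {Y | ∃ A : ∀ j : ℕ, Matrix (Fin (d (j + 1))) (Fin (d j)) ℝ,
          (∀ j, j < L → specNorm (A j) ≤ s j ∧ norm21 (A j - M j).transpose ≤ b j)
          ∧ Y = netF d n σ A X L})
      ∧ (∀ A : ∀ j : ℕ, Matrix (Fin (d (j + 1))) (Fin (d j)) ℝ,
          (∀ j, j < L → specNorm (A j) ≤ s j ∧ norm21 (A j - M j).transpose ≤ b j) →
          ∃ Y ∈ C, frobNorm (netF d n σ A X L - Y) ≤ ε)
      ∧ Real.log C.card
          ≤ frobNorm X ^ 2 * Real.log (2 * (W : ℝ) ^ 2) / ε ^ 2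
            * (∏ j ∈ Finset.range L, s j ^ 2 * ρ j ^ 2)
            * (∑ i ∈ Finset.range L, (b i / s i) ^ ((2:ℝ)/3)) ^ 3 := by
  classical
  have hlogW : 0 ≤ Real.log (2 * (W : ℝ) ^ 2) := by
    rcases Nat.eq_zero_or_pos W with h | h
    · subst h
      norm_num
    · refine Real.log_nonneg ?_
      have h1 : (1:ℝ) ≤ W := by exact_mod_cast h
      nlinarith
  have hRHS0 : 0 ≤ frobNorm X ^ 2 * Real.log (2 * (W : ℝ) ^ 2) / ε ^ 2
      * (∏ j ∈ Finset.range L, s j ^ 2 * ρ j ^ 2)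
      * (∑ i ∈ Finset.range L, (b i / s i) ^ ((2:ℝ)/3)) ^ 3 := by
    have h1 : 0 ≤ frobNorm X ^ 2 * Real.log (2 * (W : ℝ) ^ 2) / ε ^ 2 :=
      div_nonneg (mul_nonneg (sq_nonneg _) hlogW) (sq_nonneg ε)
    have h2 : 0 ≤ ∏ j ∈ Finset.range L, s j ^ 2 * ρ j ^ 2 :=
      Finset.prod_nonneg fun j _ => by positivity
    have h3 : 0 ≤ (∑ i ∈ Finset.range L, (b i / s i) ^ ((2:ℝ)/3) : ℝ) :=
      Finset.sum_nonneg fun i _ => Real.rpow_nonneg (le_of_lt (div_pos (hb i) (hs i))) _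
    have h4 : 0 ≤ (∑ i ∈ Finset.range L, (b i / s i) ^ ((2:ℝ)/3) : ℝ) ^ 3 := pow_nonneg h3 3
    exact mul_nonneg (mul_nonneg h1 h2) h4
  by_cases hne : ∀ j, j < L → (feas (s j) (b j) (M j)).Nonempty
  case neg =>
    push_neg at hne
    obtain ⟨j0, hj0L, hj0⟩ := hne
    refine ⟨∅, by simp, ?_, ?_⟩
    · intro A hA
      have hmem : A j0 ∈ feas (s j0) (b j0) (M j0) := hA j0 hj0L
      rw [hj0] at hmem
      exact absurd hmem (Set.notMem_empty _)
    · simpa [Real.log_zero] using hRHS0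
  case pos =>
  set A0 : ∀ j : ℕ, Matrix (Fin (d (j + 1))) (Fin (d j)) ℝ :=
    fun j => if h : j < L then (hne j h).choose else 0 with hA0def
  have hA0feas : ∀ j, j < L → A0 j ∈ feas (s j) (b j) (M j) := by
    intro j hj
    have : A0 j = (hne j hj).choose := by rw [hA0def]; simp [dif_pos hj]
    rw [this]
    exact (hne j hj).choose_spec
  have hA0F : ∀ j, j < L → specNorm (A0 j) ≤ s j ∧ norm21 (A0 j - M j).transpose ≤ b j :=
    fun j hj => hA0feas j hj
  -- helper producing singleton covers
  have mkC : (∀ A : ∀ j : ℕ, Matrix (Fin (d (j + 1))) (Fin (d j)) ℝ,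
        (∀ j, j < L → specNorm (A j) ≤ s j ∧ norm21 (A j - M j).transpose ≤ b j) →
        frobNorm (netF d n σ A X L - netF d n σ A0 X L) ≤ ε) →
      ∃ C : Finset (Matrix (Fin (d L)) (Fin n) ℝ),
      (↑C ⊆ {Y | ∃ A : ∀ j : ℕ, Matrix (Fin (d (j + 1))) (Fin (d j)) ℝ,
          (∀ j, j < L → specNorm (A j) ≤ s j ∧ norm21 (A j - M j).transpose ≤ b j)
          ∧ Y = netF d n σ A X L})
      ∧ (∀ A : ∀ j : ℕ, Matrix (Fin (d (j + 1))) (Fin (d j)) ℝ,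
          (∀ j, j < L → specNorm (A j) ≤ s j ∧ norm21 (A j - M j).transpose ≤ b j) →
          ∃ Y ∈ C, frobNorm (netF d n σ A X L - Y) ≤ ε)
      ∧ Real.log C.card
          ≤ frobNorm X ^ 2 * Real.log (2 * (W : ℝ) ^ 2) / ε ^ 2
            * (∏ j ∈ Finset.range L, s j ^ 2 * ρ j ^ 2)
            * (∑ i ∈ Finset.range L, (b i / s i) ^ ((2:ℝ)/3)) ^ 3 := by
    intro hall
    refine ⟨{netF d n σ A0 X L}, ?_, ?_, ?_⟩
    · intro y hy
      rw [Finset.coe_singleton, Set.mem_singleton_iff] at hy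
      exact ⟨A0, hA0F, hy⟩
    · intro A hA
      exact ⟨netF d n σ A0 X L, Finset.mem_singleton_self _, hall A hA⟩
    · simpa [Real.log_one] using hRHS0
  by_cases hdeg : frobNorm X = 0 ∨ (∃ j, j < L ∧ ρ j = 0) ∨ W = 0
  case pos =>
    refine mkC ?_
    intro A hA
    rcases hdeg with hX0 | ⟨j0, hj0L, hρ0⟩ | hW0
    · -- X = 0
      have hXz : X = 0 := frobNorm_eq_zero hX0
      have h1 : ∀ (B : ∀ j : ℕ, Matrix (Fin (d (j + 1))) (Fin (d j)) ℝ),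
          netF d n σ B X L = 0 := by
        intro B
        have h2 : netF d n σ B X 1 = 0 := by
          show σ 0 (B 0 * X.transpose) = 0
          rw [hXz, Matrix.transpose_zero, Matrix.mul_zero, hσ0]
        exact netF_zero_tail d n σ X hσ0 B 1 h2 L hL
      rw [h1 A, h1 A0, sub_self, frobNorm_zero]
      exact le_of_lt hε
    · -- some ρ j0 = 0
      have hσz : ∀ Z, σ j0 Z = 0 := by
        intro Z
        have h1 := hσ j0 Z 0
        rw [hρ0, zero_mul] at h1
        have h2 := frobNorm_nonneg (σ j0 Z - σ j0 0)
        have h3 : frobNorm (σ j0 Z - σ j0 0) = 0 := le_antisymm h1 h2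
        have h4 := frobNorm_eq_zero h3
        rw [sub_eq_zero] at h4
        rw [h4, hσ0]
      have h1 : ∀ (B : ∀ j : ℕ, Matrix (Fin (d (j + 1))) (Fin (d j)) ℝ),
          netF d n σ B X L = 0 := by
        intro B
        have h2 : netF d n σ B X (j0 + 1) = 0 := hσz _
        exact netF_zero_tail d n σ X hσ0 B (j0 + 1) h2 L (by omega)
      rw [h1 A, h1 A0, sub_self, frobNorm_zero]
      exact le_of_lt hε
    · -- W = 0, hence d L = 0
      haveI hie : IsEmpty (Fin (d L)) := by
        refine ⟨fun x => ?_⟩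
        have h1 := x.2
        have h2 := hW L le_rfl
        omega
      have h3 : frobNorm (netF d n σ A X L - netF d n σ A0 X L) = 0 := by
        unfold frobNorm
        rw [Finset.univ_eq_empty, Finset.sum_empty, Real.sqrt_zero]
      rw [h3]
      exact le_of_lt hε
  case neg =>
  push_neg at hdeg
  obtain ⟨hXne, hρLne, hWne⟩ := hdeg
  have hXpos : 0 < frobNorm X := lt_of_le_of_ne (frobNorm_nonneg X) (Ne.symm hXne)
  have hρpos : ∀ j, j < L → 0 < ρ j := fun j hj =>
    lt_of_le_of_ne (hρ j) (Ne.symm (hρLne j hj))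
  have hW1 : 1 ≤ W := Nat.pos_of_ne_zero hWne
  -- main quantities
  set Q : ℕ → ℝ := fun l => ρ l * s l with hQdef
  set Pr : ℕ → ℕ → ℝ := fun a b' => ∏ l ∈ Finset.Ico a b', Q l with hPrdef
  set r : ℕ → ℝ := fun j => b j / s j with hrdef
  set D : ℝ := ∑ i ∈ Finset.range L, r i ^ ((2:ℝ)/3) with hDdef
  set RR : ℕ → ℝ := fun i => frobNorm X * Pr 0 i with hRRdef
  set κ : ℕ → ℝ := fun j => ρ j * Pr (j + 1) L with hκdef
  set εj : ℕ → ℝ := fun j => ε * r j ^ ((2:ℝ)/3) / (D * κ j) with hεjdef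
  set T : ℕ → ℝ :=
    fun i => (ε / D) * (∑ j ∈ Finset.range i, r j ^ ((2:ℝ)/3)) / Pr i L with hTdef
  have hQpos : ∀ l, l < L → 0 < Q l := fun l hl => mul_pos (hρpos l hl) (hs l)
  have hPrpos : ∀ a b', b' ≤ L → 0 < Pr a b' := by
    intro a b' hb'
    refine Finset.prod_pos fun l hl => ?_
    exact hQpos l (lt_of_lt_of_le (Finset.mem_Ico.1 hl).2 hb')
  have hrpos : ∀ j, 0 < r j := fun j => div_pos (hb j) (hs j)
  have hr23pos : ∀ j, 0 < r j ^ ((2:ℝ)/3) := fun j => Real.rpow_pos_of_pos (hrpos j) _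
  have hDpos : 0 < D := by
    rw [hDdef]
    refine Finset.sum_pos (fun i _ => hr23pos i) ?_
    exact Finset.nonempty_range_iff.2 (by omega)
  have hκpos : ∀ j, j < L → 0 < κ j := fun j hj =>
    mul_pos (hρpos j hj) (hPrpos (j + 1) L le_rfl)
  have hεjpos : ∀ j, j < L → 0 < εj j := fun j hj =>
    div_pos (mul_pos hε (hr23pos j)) (mul_pos hDpos (hκpos j hj))
  -- recursion for T
  have hTrec : ∀ i, i < L → ρ i * (s i * T i + εj i) = T (i + 1) := by
    intro i hi
    have hPriL : Pr i L = Q i * Pr (i + 1) L :=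
      Finset.prod_eq_prod_Ico_succ_bot hi Q
    have h1 : T i = (ε / D) * (∑ j ∈ Finset.range i, r j ^ ((2:ℝ)/3)) / Pr i L := rfl
    have h2 : T (i + 1)
        = (ε / D) * ((∑ j ∈ Finset.range i, r j ^ ((2:ℝ)/3)) + r i ^ ((2:ℝ)/3))
          / Pr (i + 1) L := by
      show (ε / D) * (∑ j ∈ Finset.range (i+1), r j ^ ((2:ℝ)/3)) / Pr (i+1) L = _
      rw [Finset.sum_range_succ]
    have h3 : εj i = ε * r i ^ ((2:ℝ)/3) / (D * (ρ i * Pr (i + 1) L)) := rfl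
    rw [h1, h2, h3, hPriL]
    have hQi : Q i = ρ i * s i := rfl
    rw [hQi]
    have hρi := hρpos i hi
    have hsi := hs i
    have hPr' := hPrpos (i + 1) L le_rfl
    field_simp
  have hT0 : T 0 = 0 := by
    show (ε / D) * (∑ j ∈ Finset.range 0, r j ^ ((2:ℝ)/3)) / Pr 0 L = 0
    rw [Finset.range_zero, Finset.sum_empty, mul_zero, zero_div]
  have hTL : T L = ε := by
    have hPLL : Pr L L = 1 := by
      show ∏ l ∈ Finset.Ico L L, Q l = 1
      rw [Finset.Ico_self, Finset.prod_empty]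
    show (ε / D) * (∑ j ∈ Finset.range L, r j ^ ((2:ℝ)/3)) / Pr L L = ε
    rw [hPLL, ← hDdef, div_one]
    field_simp
  -- the main induction
  have hind : ∀ i, i ≤ L →
      ∃ P : Finset (∀ j : ℕ, Matrix (Fin (d (j + 1))) (Fin (d j)) ℝ),
        P.Nonempty
        ∧ (∀ a' ∈ P, ∀ j, j < L → specNorm (a' j) ≤ s j ∧ norm21 (a' j - M j).transpose ≤ b j)
        ∧ (∀ A : ∀ j : ℕ, Matrix (Fin (d (j + 1))) (Fin (d j)) ℝ,
            (∀ j, j < L → specNorm (A j) ≤ s j ∧ norm21 (A j - M j).transpose ≤ b j) →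
            ∃ a' ∈ P, frobNorm (netF d n σ A X i - netF d n σ a' X i) ≤ T i)
        ∧ ((P.card : ℝ)
            ≤ ∏ j ∈ Finset.range i, (2 * (W:ℝ)^2) ^ (((b j * RR j / εj j)^2 : ℝ))) := by
    intro i
    induction i with
    | zero =>
      intro _
      refine ⟨{A0}, Finset.singleton_nonempty _, ?_, ?_, ?_⟩
      · intro a' ha'
        rw [Finset.mem_singleton] at ha'
        subst ha'
        exact hA0F
      · intro A hA
        refine ⟨A0, Finset.mem_singleton_self _, ?_⟩
        show frobNorm (X.transpose - X.transpose) ≤ T 0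
        rw [sub_self, frobNorm_zero, hT0]
      · simp
    | succ i ih =>
      intro hi1
      have hiL : i < L := hi1
      obtain ⟨P, hPne, hPfeas, hPcov, hPcard⟩ := ih (le_of_lt hiL)
      have hstep : ∀ a', a' ∈ P →
          ∃ F : Finset (Matrix (Fin (d (i + 1))) (Fin (d i)) ℝ),
            F.Nonempty
            ∧ (∀ B ∈ F, B ∈ feas (s i) (b i) (M i))
            ∧ (∀ A ∈ feas (s i) (b i) (M i), ∃ B ∈ F,
                frobNorm (A * netF d n σ a' X i - B * netF d n σ a' X i) ≤ εj i)
            ∧ ((F.card : ℝ) ≤ (2 * (W:ℝ)^2) ^ (((b i * RR i / εj i)^2 : ℝ))) := by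
        intro a' ha'
        refine layer_cover W (hW (i+1) hi1) (hW i (le_of_lt hiL)) hW1 (s i) (b i)
          (hs i) (hb i) (M i) (hne i hiL) (netF d n σ a' X i) (RR i) ?_ (εj i)
          (hεjpos i hiL)
        show frobNorm (netF d n σ a' X i) ≤ frobNorm X * Pr 0 i
        have h5 : Pr 0 i = ∏ j ∈ Finset.range i, (ρ j * s j) := by
          show ∏ l ∈ Finset.Ico 0 i, Q l = ∏ j ∈ Finset.range i, (ρ j * s j)
          rw [← Finset.range_eq_Ico]
        rw [h5]
        exact netF_norm d n σ X ρ hρ hσ hσ0 s a' i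
          (fun j hj => (hPfeas a' ha' j (lt_of_lt_of_le hj (le_of_lt hiL))).1)
      choose Fc hFne hFfeas hFcov hFcard using hstep
      set P' : Finset (∀ j : ℕ, Matrix (Fin (d (j + 1))) (Fin (d j)) ℝ) :=
        P.attach.biUnion
          (fun ap => (Fc ap.1 ap.2).image (fun B => Function.update ap.1 i B)) with hP'def
      obtain ⟨a0', ha0'⟩ := hPne
      obtain ⟨B0', hB0'⟩ := hFne a0' ha0'
      refine ⟨P', ?_, ?_, ?_, ?_⟩
      · exact ⟨Function.update a0' i B0', Finset.mem_biUnion.2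
          ⟨⟨a0', ha0'⟩, Finset.mem_attach _ _, Finset.mem_image_of_mem _ hB0'⟩⟩
      · intro a'' ha''
        rw [hP'def, Finset.mem_biUnion] at ha''
        obtain ⟨ap, -, hmem⟩ := ha''
        rw [Finset.mem_image] at hmem
        obtain ⟨B, hB, rfl⟩ := hmem
        intro j hj
        rcases eq_or_ne j i with h | h
        · subst h
          rw [Function.update_self]
          exact hFfeas ap.1 ap.2 B hB
        · rw [Function.update_of_ne h]
          exact hPfeas ap.1 ap.2 j hj
      · intro A hA
        obtain ⟨a', ha', hcov⟩ := hPcov A hA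
        have hAi : A i ∈ feas (s i) (b i) (M i) := hA i hiL
        obtain ⟨B, hB, hBcov⟩ := hFcov a' ha' (A i) hAi
        refine ⟨Function.update a' i B, Finset.mem_biUnion.2
          ⟨⟨a', ha'⟩, Finset.mem_attach _ _, Finset.mem_image_of_mem _ hB⟩, ?_⟩
        have hupd1 : netF d n σ (Function.update a' i B) X (i + 1)
            = σ i (B * netF d n σ a' X i) := by
          show σ i (Function.update a' i B i * netF d n σ (Function.update a' i B) X i) = _
          rw [Function.update_self]
          congr 1
          rw [netF_congr d n σ X (Function.update a' i B) a' i
            (fun j hj => Function.update_of_ne (ne_of_lt hj) _ _)]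
        rw [hupd1]
        show frobNorm (σ i (A i * netF d n σ A X i) - σ i (B * netF d n σ a' X i)) ≤ T (i+1)
        have hlip := hσ i (A i * netF d n σ A X i) (B * netF d n σ a' X i)
        have htri : frobNorm (A i * netF d n σ A X i - B * netF d n σ a' X i)
            ≤ s i * T i + εj i := by
          calc frobNorm (A i * netF d n σ A X i - B * netF d n σ a' X i)
              ≤ frobNorm (A i * netF d n σ A X i - A i * netF d n σ a' X i)
                + frobNorm (A i * netF d n σ a' X i - B * netF d n σ a' X i) :=
                frobNorm_sub_le _ _ _
            _ ≤ s i * T i + εj i := by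
                refine add_le_add ?_ hBcov
                have h7 : A i * netF d n σ A X i - A i * netF d n σ a' X i
                    = A i * (netF d n σ A X i - netF d n σ a' X i) := by
                  rw [Matrix.mul_sub]
                have h8 : frobNorm (A i * (netF d n σ A X i - netF d n σ a' X i))
                    ≤ s i * frobNorm (netF d n σ A X i - netF d n σ a' X i) :=
                  frob_mul_le_spec hAi.1 _
                rw [h7]
                refine le_trans h8 ?_
                exact mul_le_mul_of_nonneg_left hcov (le_of_lt (hs i))
        calc frobNorm (σ i (A i * netF d n σ A X i) - σ i (B * netF d n σ a' X i))
            ≤ ρ i * frobNorm (A i * netF d n σ A X i - B * netF d n σ a' X i) := hlip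
          _ ≤ ρ i * (s i * T i + εj i) :=
              mul_le_mul_of_nonneg_left htri (le_of_lt (hρpos i hiL))
          _ = T (i + 1) := hTrec i hiL
      · -- cardinality
        have h9 : P'.card ≤ ∑ ap ∈ P.attach, (Fc ap.1 ap.2).card := by
          refine le_trans Finset.card_biUnion_le ?_
          exact Finset.sum_le_sum fun ap _ => Finset.card_image_le
        have h10 : (P'.card : ℝ) ≤ ∑ ap ∈ P.attach, ((Fc ap.1 ap.2).card : ℝ) := by
          exact_mod_cast h9
        have h11 : ∑ ap ∈ P.attach, ((Fc ap.1 ap.2).card : ℝ)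
            ≤ ∑ _ap ∈ P.attach, (2 * (W:ℝ)^2) ^ (((b i * RR i / εj i)^2 : ℝ)) :=
          Finset.sum_le_sum fun ap _ => hFcard ap.1 ap.2
        have h12 : ∑ _ap ∈ P.attach, (2 * (W:ℝ)^2) ^ (((b i * RR i / εj i)^2 : ℝ))
            = (P.card : ℝ) * (2 * (W:ℝ)^2) ^ (((b i * RR i / εj i)^2 : ℝ)) := by
          rw [Finset.sum_const, Finset.card_attach, nsmul_eq_mul]
        have hBd0 : (0:ℝ) ≤ (2 * (W:ℝ)^2) ^ (((b i * RR i / εj i)^2 : ℝ)) :=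
          Real.rpow_nonneg (by positivity) _
        calc (P'.card : ℝ) ≤ (P.card : ℝ) * (2 * (W:ℝ)^2) ^ (((b i * RR i / εj i)^2 : ℝ)) := by
              rw [← h12]
              exact le_trans h10 h11
          _ ≤ (∏ j ∈ Finset.range i, (2 * (W:ℝ)^2) ^ (((b j * RR j / εj j)^2 : ℝ)))
                * (2 * (W:ℝ)^2) ^ (((b i * RR i / εj i)^2 : ℝ)) :=
              mul_le_mul_of_nonneg_right hPcard hBd0
          _ = ∏ j ∈ Finset.range (i+1), (2 * (W:ℝ)^2) ^ (((b j * RR j / εj j)^2 : ℝ)) := by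
              rw [Finset.prod_range_succ]
  -- conclude
  obtain ⟨P, hPne, hPfeas, hPcov, hPcard⟩ := hind L le_rfl
  set C : Finset (Matrix (Fin (d L)) (Fin n) ℝ) :=
    P.image (fun a' => netF d n σ a' X L) with hCdef
  have hCne : C.Nonempty := hPne.image _
  refine ⟨C, ?_, ?_, ?_⟩
  · intro y hy
    rw [hCdef] at hy
    rw [Finset.coe_image, Set.mem_image] at hy
    obtain ⟨a', ha', rfl⟩ := hy
    have ha'' : a' ∈ P := by exact_mod_cast ha'
    exact ⟨a', hPfeas a' ha'', rfl⟩
  · intro A hA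
    obtain ⟨a', ha', hcov⟩ := hPcov A hA
    refine ⟨netF d n σ a' X L, Finset.mem_image_of_mem _ ha', ?_⟩
    rw [← hTL]
    exact hcov
  · -- the log bound
    have hCcard : (C.card : ℝ) ≤ (P.card : ℝ) := by
      exact_mod_cast Finset.card_image_le
    have hBdpos : ∀ j, (0:ℝ) < (2 * (W:ℝ)^2) ^ (((b j * RR j / εj j)^2 : ℝ)) := by
      intro j
      refine Real.rpow_pos_of_pos ?_ _
      have h1 : (1:ℝ) ≤ W := by exact_mod_cast hW1
      nlinarith
    have hClog : Real.log C.card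
        ≤ ∑ j ∈ Finset.range L, ((b j * RR j / εj j)^2) * Real.log (2 * (W:ℝ)^2) := by
      have h1 : (0:ℝ) < C.card := by
        exact_mod_cast Finset.card_pos.2 hCne
      calc Real.log C.card
          ≤ Real.log (∏ j ∈ Finset.range L, (2 * (W:ℝ)^2) ^ (((b j * RR j / εj j)^2 : ℝ))) := by
            refine Real.log_le_log h1 ?_
            exact le_trans hCcard hPcard
        _ = ∑ j ∈ Finset.range L, Real.log ((2 * (W:ℝ)^2) ^ (((b j * RR j / εj j)^2 : ℝ))) := by
            refine Real.log_prod fun j _ => ne_of_gt (hBdpos j)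
        _ = ∑ j ∈ Finset.range L, ((b j * RR j / εj j)^2) * Real.log (2 * (W:ℝ)^2) := by
            refine Finset.sum_congr rfl fun j _ => ?_
            rw [Real.log_rpow (by
              have h1 : (1:ℝ) ≤ W := by exact_mod_cast hW1
              nlinarith)]
    -- per-term value
    have hxj : ∀ j, j < L → (b j * RR j / εj j)^2
        = (frobNorm X * Pr 0 L / ε)^2 * D^2 * r j ^ ((2:ℝ)/3) := by
      intro j hj
      have hrj := hrpos j
      have hr23 := hr23pos j
      have hPr1 : Pr 0 L = Pr 0 j * (Q j * Pr (j + 1) L) := by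
        have ha1 : Pr 0 j * Pr j L = Pr 0 L :=
          Finset.prod_Ico_consecutive Q (Nat.zero_le j) (le_of_lt hj)
        have ha2 : Pr j L = Q j * Pr (j + 1) L := Finset.prod_eq_prod_Ico_succ_bot hj Q
        rw [← ha1, ha2]
      have hE1 : b j * (frobNorm X * Pr 0 j) * (ρ j * Pr (j+1) L)
          = frobNorm X * Pr 0 L * r j := by
        show b j * (frobNorm X * Pr 0 j) * (ρ j * Pr (j+1) L) = frobNorm X * Pr 0 L * (b j / s j)
        rw [hPr1]
        show b j * (frobNorm X * Pr 0 j) * (ρ j * Pr (j+1) L)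
            = frobNorm X * (Pr 0 j * (ρ j * s j * Pr (j+1) L)) * (b j / s j)
        field_simp
        ring_nf
        exact (mul_inv_cancel_right₀ (ne_of_gt (hs j)) _).symm
      have hdiv : r j ^ ((1:ℝ)/3) * r j ^ ((2:ℝ)/3) = r j := by
        rw [← Real.rpow_add hrj]
        norm_num
      have hx_val : b j * RR j / εj j = frobNorm X * Pr 0 L * D / ε * r j ^ ((1:ℝ)/3) := by
        rw [div_eq_iff (ne_of_gt (hεjpos j hj))]
        show b j * RR j = frobNorm X * Pr 0 L * D / ε * r j ^ ((1:ℝ)/3)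
            * (ε * r j ^ ((2:ℝ)/3) / (D * κ j))
        have hκj := hκpos j hj
        have hrj' : r j = b j * (s j)⁻¹ := by
          show b j / s j = b j * (s j)⁻¹
          rw [div_eq_mul_inv]
        field_simp
        linear_combination hE1 - (frobNorm X * Pr 0 L) * hdiv
      rw [hx_val]
      have hsq13 : (r j ^ ((1:ℝ)/3))^2 = r j ^ ((2:ℝ)/3) := by
        rw [← Real.rpow_natCast (r j ^ ((1:ℝ)/3)) 2, ← Real.rpow_mul (le_of_lt hrj)]
        norm_num
      rw [mul_pow, hsq13]
      ring
    have hsum : ∑ j ∈ Finset.range L, ((b j * RR j / εj j)^2) * Real.log (2 * (W:ℝ)^2)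
        = (frobNorm X * Pr 0 L / ε)^2 * D^3 * Real.log (2 * (W:ℝ)^2) := by
      calc ∑ j ∈ Finset.range L, ((b j * RR j / εj j)^2) * Real.log (2 * (W:ℝ)^2)
          = ∑ j ∈ Finset.range L, ((frobNorm X * Pr 0 L / ε)^2 * D^2
              * r j ^ ((2:ℝ)/3)) * Real.log (2 * (W:ℝ)^2) := by
            refine Finset.sum_congr rfl fun j hjm => ?_
            rw [hxj j (Finset.mem_range.1 hjm)]
        _ = ((frobNorm X * Pr 0 L / ε)^2 * D^2 * Real.log (2 * (W:ℝ)^2))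
              * ∑ j ∈ Finset.range L, r j ^ ((2:ℝ)/3) := by
            rw [Finset.mul_sum]
            exact Finset.sum_congr rfl fun j _ => by ring
        _ = (frobNorm X * Pr 0 L / ε)^2 * D^3 * Real.log (2 * (W:ℝ)^2) := by
            rw [← hDdef]
            ring
    have hPr2 : ∏ j ∈ Finset.range L, (s j ^ 2 * ρ j ^ 2) = (Pr 0 L)^2 := by
      have h1 : Pr 0 L = ∏ j ∈ Finset.range L, Q j := by
        rw [hPrdef]
        rw [Finset.range_eq_Ico]
      rw [h1, ← Finset.prod_pow]
      refine Finset.prod_congr rfl fun j _ => ?_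
      show s j ^ 2 * ρ j ^ 2 = (ρ j * s j)^2
      ring
    refine le_trans hClog ?_
    rw [hsum, hPr2]
    have hDD : (∑ i ∈ Finset.range L, (b i / s i) ^ ((2:ℝ)/3)) = D :=
      Finset.sum_congr rfl fun i _ => rfl
    rw [← hDD]
    have hfin : (frobNorm X * Pr 0 L / ε)^2 * D^3 * Real.log (2 * (W:ℝ)^2)
        = frobNorm X ^ 2 * Real.log (2 * (W : ℝ) ^ 2) / ε ^ 2 * Pr 0 L ^ 2 * D ^ 3 := by
      field_simp
    exact le_of_eq hfin
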